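/- arXiv:2412.07510 — 9 statements merged into one kernel-verified Lean document; each statement's English description precedes it below -/
import Mathlib

section
/- Let S be a finite commutative local ring with identity whose maximal ideal is principal, and suppose S has at least two nonzero zero-divisors. Then the Roman domination number of the zero-divisor graph of S equals 2, i.e., γ_R(Γ(S)) = 2. -/
/-- The set of nonzero zero-divisors of a commutative ring `R`. -/
def zdvSet (R : Type*) [CommRing R] : Set R :=
  {x | x ≠ 0 ∧ ∃ y, y ≠ 0 ∧ x * y = 0}

/-- The zero-divisor graph `Γ(R)`: vertices are the nonzero zero-divisors of `R`,
with distinct `x`, `y` adjacent iff `x * y = 0`. -/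
def zeroDivisorGraph (R : Type*) [CommRing R] : SimpleGraph (zdvSet R) where
  Adj a b := a ≠ b ∧ (a : R) * (b : R) = 0
  symm := by
    constructor
    rintro a b ⟨hne, hmul⟩
    exact ⟨hne.symm, by rwa [mul_comm]⟩
  loopless := by constructor; rintro a ⟨hne, _⟩; exact hne rfl

/-- A Roman dominating function: every vertex with value `0` has a neighbour
with value `2`. -/
def IsRomanDominating {V : Type*} (G : SimpleGraph V) (f : V → Fin 3) : Prop :=
  ∀ u, f u = 0 → ∃ v, G.Adj u v ∧ f v = 2

/-- The Roman domination number: the minimum weight of a (finitely supported)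
Roman dominating function. -/
noncomputable def romanDominationNumber {V : Type*} (G : SimpleGraph V) : ℕ :=
  sInf {w | ∃ f : V → Fin 3, IsRomanDominating G f ∧
    {v | f v ≠ 0}.Finite ∧ w = ∑ᶠ v, (f v : ℕ)}

/-!
A finite local ring is Artinian, so its maximal ideal `𝔪` is nilpotent: if `𝔪 ^ k ≠ 0 = 𝔪 ^ (k + 1)`,
any nonzero `x ∈ 𝔪 ^ k` is killed by `𝔪`, which contains every zero-divisor. So `x` is a vertex of
`Γ(S)` adjacent to all others, and weight 2 on `x` alone is Roman dominating. Conversely, a Roman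
dominating function either takes the value 2 somewhere or vanishes nowhere, so on a graph with two
vertices its weight is at least 2.
-/

section RomanDomination

variable {V : Type*} (G : SimpleGraph V)

theorem IsRomanDominating.two_le_finsum [Nontrivial V] {f : V → Fin 3}
    (hf : IsRomanDominating G f) (hfin : {v | f v ≠ 0}.Finite) :
    2 ≤ ∑ᶠ v, (f v : ℕ) := by
  classical
  have hsupp : Function.HasFiniteSupport fun v ↦ (f v : ℕ) := by
    simpa [Function.HasFiniteSupport, Function.support, Fin.val_eq_zero_iff] using hfin
  by_cases htwo : ∃ v, f v = 2
  · obtain ⟨v, hv⟩ := htwo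
    calc 2 = (f v : ℕ) := by simp [hv]
      _ ≤ ∑ᶠ v, (f v : ℕ) := single_le_finsum v hsupp fun _ ↦ Nat.zero_le _
  · have hpos : ∀ u, f u ≠ 0 := fun u hu ↦
      let ⟨v, _, hv⟩ := hf u hu; htwo ⟨v, hv⟩
    have hmem : ∀ u, u ∈ hsupp.toFinset := fun u ↦
      hsupp.mem_toFinset.2 (Fin.val_ne_zero_iff.2 (hpos u))
    obtain ⟨a, b, hab⟩ := exists_pair_ne V
    calc 2 ≤ (f a : ℕ) + f b := by
          have := Fin.pos_iff_ne_zero.2 (hpos a)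
          have := Fin.pos_iff_ne_zero.2 (hpos b)
          omega
      _ = ∑ u ∈ {a, b}, (f u : ℕ) := (Finset.sum_pair (f := fun u ↦ (f u : ℕ)) hab).symm
      _ ≤ ∑ u ∈ hsupp.toFinset, (f u : ℕ) :=
          Finset.sum_le_sum_of_subset (by simp [Finset.insert_subset_iff, hmem])
      _ = ∑ᶠ v, (f v : ℕ) := (finsum_eq_sum _ hsupp).symm

theorem isRomanDominating_single [DecidableEq V] {v : V} (hv : ∀ u ≠ v, G.Adj u v) :
    IsRomanDominating G (Pi.single v 2) := by
  intro u hu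
  have huv : u ≠ v := by rintro rfl; simp at hu
  exact ⟨v, hv u huv, by simp⟩

theorem romanDominationNumber_eq_two [Nontrivial V] {v : V} (hv : ∀ u ≠ v, G.Adj u v) :
    romanDominationNumber G = 2 := by
  classical
  have hmem : 2 ∈ {w | ∃ f : V → Fin 3, IsRomanDominating G f ∧
      {v | f v ≠ 0}.Finite ∧ w = ∑ᶠ v, (f v : ℕ)} := by
    refine ⟨Pi.single v 2, isRomanDominating_single G hv,
      (Set.finite_singleton v).subset fun u hu ↦ ?_, ?_⟩
    · by_contra huv
      simp_all
    · rw [finsum_eq_single _ v fun u hu ↦ by simp [hu]]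
      simp
  refine le_antisymm (Nat.sInf_le hmem) (le_csInf ⟨2, hmem⟩ ?_)
  rintro w ⟨f, hf, hfin, rfl⟩
  exact hf.two_le_finsum G hfin

end RomanDomination

theorem Ideal.exists_ne_zero_forall_mul_eq_zero_of_isNilpotent {R : Type*} [CommRing R]
    [Nontrivial R] {I : Ideal R} (hI : IsNilpotent I) : ∃ x ≠ 0, ∀ z ∈ I, z * x = 0 := by
  classical
  obtain ⟨k, hk⟩ : ∃ k, I ^ k ≠ ⊥ ∧ I ^ (k + 1) = ⊥ := by
    have hpos : Nat.find hI ≠ 0 := fun h ↦ by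
      simpa [h] using Nat.find_spec hI
    refine ⟨Nat.find hI - 1, Nat.find_min hI (by omega), ?_⟩
    rw [Nat.sub_add_cancel (Nat.one_le_iff_ne_zero.2 hpos)]
    exact Nat.find_spec hI
  obtain ⟨x, hxI, hx0⟩ := Submodule.exists_mem_ne_zero_of_ne_bot hk.1
  refine ⟨x, hx0, fun z hz ↦ ?_⟩
  have : z * x ∈ I ^ (k + 1) := pow_succ' I k ▸ Ideal.mul_mem_mul hz hxI
  simpa [hk.2] using this

theorem IsLocalRing.exists_ne_zero_forall_mem_maximalIdeal_mul_eq_zero (R : Type*) [CommRing R]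
    [IsLocalRing R] [IsArtinianRing R] : ∃ x ≠ 0, ∀ z ∈ maximalIdeal R, z * x = 0 := by
  apply Ideal.exists_ne_zero_forall_mul_eq_zero_of_isNilpotent
  rw [← jacobson_eq_maximalIdeal ⊥ bot_ne_top]
  exact IsArtinianRing.isNilpotent_jacobson_bot

theorem mem_maximalIdeal_of_mem_zdvSet {R : Type*} [CommRing R] [IsLocalRing R] {x : R}
    (hx : x ∈ zdvSet R) : x ∈ IsLocalRing.maximalIdeal R := by
  obtain ⟨-, y, hy0, hxy⟩ := hx
  exact fun hu ↦ hy0 (hu.mul_right_eq_zero.mp hxy)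

theorem exists_forall_adj_zeroDivisorGraph (R : Type*) [CommRing R] [IsLocalRing R]
    [IsArtinianRing R] (h : (zdvSet R).Nonempty) :
    ∃ v, ∀ u ≠ v, (zeroDivisorGraph R).Adj u v := by
  obtain ⟨x, hx0, hx⟩ := IsLocalRing.exists_ne_zero_forall_mem_maximalIdeal_mul_eq_zero R
  have hkill : ∀ z ∈ zdvSet R, z * x = 0 := fun z hz ↦ hx z (mem_maximalIdeal_of_mem_zdvSet hz)
  obtain ⟨z, hz⟩ := h
  exact ⟨⟨x, hx0, z, hz.1, mul_comm x z ▸ hkill z hz⟩, fun u hu ↦ ⟨hu, hkill u u.2⟩⟩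

theorem stmt_0_general (S : Type*) [CommRing S] [IsLocalRing S] [Finite S]
    (htwo : ∃ a b : S, a ≠ b ∧ a ∈ zdvSet S ∧ b ∈ zdvSet S) :
    romanDominationNumber (zeroDivisorGraph S) = 2 := by
  obtain ⟨a, b, hab, ha, hb⟩ := htwo
  have : Nontrivial (zdvSet S) := ⟨⟨a, ha⟩, ⟨b, hb⟩, fun h ↦ hab (congrArg Subtype.val h)⟩
  obtain ⟨v, hv⟩ := exists_forall_adj_zeroDivisorGraph S ⟨a, ha⟩
  exact romanDominationNumber_eq_two _ hv

/-- a finite commutative local ring with principal maximal ideal and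
at least two nonzero zero-divisors has Roman domination number 2 for its
zero-divisor graph. -/
theorem stmt_0 (S : Type*) [CommRing S] [IsLocalRing S] [Finite S]
    (hprin : (IsLocalRing.maximalIdeal S).IsPrincipal)
    (htwo : ∃ a b : S, a ≠ b ∧ a ∈ zdvSet S ∧ b ∈ zdvSet S) :
    romanDominationNumber (zeroDivisorGraph S) = 2 :=
  stmt_0_general S htwo
end

section
/- Let R₁ and R₂ be nontrivial commutative rings with identity, each having at most one nonzero zero-divisor (so each Γ(Rᵢ) has diameter 0), and suppose |R₁| ≥ 5 and |R₂| ≥ 5. Then γ_R(Γ(R₁ × R₂)) = 4. -/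
open Cardinal

section ZeroDivisors

variable {R : Type*} [CommRing R]

lemma eq_zero_or_eq_of_mul_eq_zero (h : (zdvSet R).Subsingleton) {a r : R} (ha : a ∈ zdvSet R)
    (hr : r * a = 0) : r = 0 ∨ r = a :=
  or_iff_not_imp_left.2 fun hr0 => h ⟨hr0, a, ha.1, hr⟩ ha

lemma mem_of_mul_self_eq_zero (h : (zdvSet R).Subsingleton) {a : R} (ha : a ≠ 0)
    (haa : a * a = 0) (r : R) : r ∈ ({0, a, 1, 1 + a} : Set R) := by
  have ha' : a ∈ zdvSet R := ⟨ha, a, ha, haa⟩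
  rcases eq_zero_or_eq_of_mul_eq_zero h ha' (r := r * a) (by rw [mul_assoc, haa, mul_zero])
    with hra | hra
  · rcases eq_zero_or_eq_of_mul_eq_zero h ha' hra with rfl | rfl <;> simp
  · rcases eq_zero_or_eq_of_mul_eq_zero h ha' (r := r - 1) (by rw [sub_mul, one_mul, hra, sub_self])
      with hr | hr
    · simp [sub_eq_zero.1 hr]
    · simp [sub_eq_iff_eq_add'.1 hr]

lemma mk_le_four_of_mul_self_eq_zero (h : (zdvSet R).Subsingleton) {a : R} (ha : a ≠ 0)
    (haa : a * a = 0) : #R ≤ 4 := by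
  classical
  calc #R = #(Set.univ : Set R) := mk_univ.symm
    _ ≤ #(({0, a, 1, 1 + a} : Finset R) : Set R) :=
      mk_le_mk_of_subset fun r _ => by simpa using mem_of_mul_self_eq_zero h ha haa r
    _ ≤ 4 := by rw [Finset.coe_sort_coe, mk_coe_finset]; exact_mod_cast Finset.card_le_four

lemma isDomain_of_zdvSet_subsingleton (h : (zdvSet R).Subsingleton) (hc : 5 ≤ #R) :
    IsDomain R := by
  have : Nontrivial R := one_lt_iff_nontrivial.1 (lt_of_lt_of_le (by norm_num) hc)
  have : NoZeroDivisors R := ⟨fun {a b} hab => by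
    by_contra! hne
    obtain rfl : b = a := h ⟨hne.2, a, hne.1, by rw [mul_comm, hab]⟩ ⟨hne.1, b, hne.2, hab⟩
    have : (5 : Cardinal) ≤ 4 := hc.trans (mk_le_four_of_mul_self_eq_zero h hne.1 hab)
    norm_num at this⟩
  exact NoZeroDivisors.to_isDomain R

end ZeroDivisors

lemma Cardinal.le_mk_ne_of_add_one_le {α : Type*} (x : α) {c : Cardinal} (hc : c + 1 ≤ #α) :
    c ≤ #{y // y ≠ x} := by
  have : #α = #{y // y ≠ x} + 1 := by rw [← mk_sum_compl {x}, mk_singleton, add_comm]; rfl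
  exact add_one_le_add_one_iff.1 (this ▸ hc)

lemma zeroDivisorGraph_adj {R : Type*} [CommRing R] {a b : zdvSet R} :
    (zeroDivisorGraph R).Adj a b ↔ a ≠ b ∧ (a : R) * b = 0 :=
  Iff.rfl

section Product

variable (R₁ R₂ : Type*) [CommRing R₁] [CommRing R₂] [IsDomain R₁] [IsDomain R₂]

def sumNeZeroToZdvSetProd : {a : R₁ // a ≠ 0} ⊕ {b : R₂ // b ≠ 0} → zdvSet (R₁ × R₂)
  | .inl a => ⟨(a, 0), by simp [Prod.ext_iff, a.2], (0, 1), by simp, by simp⟩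
  | .inr b => ⟨(0, b), by simp [Prod.ext_iff, b.2], (1, 0), by simp, by simp⟩

lemma bijective_sumNeZeroToZdvSetProd : Function.Bijective (sumNeZeroToZdvSetProd R₁ R₂) := by
  refine ⟨?_, ?_⟩
  · rintro (⟨a, ha⟩ | ⟨b, hb⟩) (⟨a', ha'⟩ | ⟨b', hb'⟩) h <;>
      simp_all [sumNeZeroToZdvSetProd, Subtype.ext_iff, Prod.ext_iff]
  · rintro ⟨⟨x, y⟩, hxy, ⟨c, d⟩, hcd, hmul⟩
    simp only [ne_eq, Prod.mk_mul_mk, Prod.mk_eq_zero, mul_eq_zero] at hxy hcd hmul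
    by_cases hx : x = 0
    · exact ⟨.inr ⟨y, fun hy => hxy ⟨hx, hy⟩⟩, Subtype.ext (by simp [sumNeZeroToZdvSetProd, hx])⟩
    · have hy : y = 0 := by tauto
      exact ⟨.inl ⟨x, hx⟩, Subtype.ext (by simp [sumNeZeroToZdvSetProd, hy])⟩

noncomputable def completeBipartiteGraphIsoZeroDivisorGraphProd :
    completeBipartiteGraph {a : R₁ // a ≠ 0} {b : R₂ // b ≠ 0} ≃g zeroDivisorGraph (R₁ × R₂) where
  toEquiv := .ofBijective _ (bijective_sumNeZeroToZdvSetProd R₁ R₂)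
  map_rel_iff' {u v} := by
    rcases u with ⟨a, ha⟩ | ⟨b, hb⟩ <;> rcases v with ⟨a', ha'⟩ | ⟨b', hb'⟩ <;>
      simp [zeroDivisorGraph_adj, sumNeZeroToZdvSetProd, Subtype.ext_iff, Prod.ext_iff, *]

end Product

lemma Finset.sum_le_finsum {α M : Type*} [AddCommMonoid M] [PartialOrder M]
    [CanonicallyOrderedAdd M] {g : α → M} (hg : (Function.support g).Finite) (T : Finset α) :
    ∑ v ∈ T, g v ≤ ∑ᶠ v, g v := by
  classical
  rw [finsum_eq_sum_of_support_subset g (s := T ∪ hg.toFinset) (by simp)]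
  exact Finset.sum_le_sum_of_subset Finset.subset_union_left

section RomanDomination

variable {V : Type*} {G : SimpleGraph V} {f : V → Fin 3}

-- `romanDominationNumber G` is, by definition, `sInf (romanWeights G)`.
def romanWeights (G : SimpleGraph V) : Set ℕ :=
  {w | ∃ f : V → Fin 3, IsRomanDominating G f ∧ {v | f v ≠ 0}.Finite ∧ w = ∑ᶠ v, (f v : ℕ)}

lemma sum_le_finsum_fin_three (hfin : {v | f v ≠ 0}.Finite) (T : Finset V) :
    ∑ v ∈ T, (f v : ℕ) ≤ ∑ᶠ v, (f v : ℕ) :=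
  T.sum_le_finsum (by simpa [Function.support, Fin.val_ne_zero_iff] using hfin)

lemma card_le_finsum_fin_three (hfin : {v | f v ≠ 0}.Finite) {T : Finset V}
    (hT : ∀ v ∈ T, f v ≠ 0) : T.card ≤ ∑ᶠ v, (f v : ℕ) :=
  calc T.card = ∑ _ ∈ T, 1 := T.card_eq_sum_ones
    _ ≤ ∑ v ∈ T, (f v : ℕ) :=
      Finset.sum_le_sum fun v hv => Nat.one_le_iff_ne_zero.2 (Fin.val_ne_zero_iff.2 (hT v hv))
    _ ≤ ∑ᶠ v, (f v : ℕ) := sum_le_finsum_fin_three hfin T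

lemma IsRomanDominating.ne_zero_of_forall_adj (hf : IsRomanDominating G f) {u : V}
    (hu : ∀ v, G.Adj u v → f v ≠ 2) : f u ≠ 0 := fun h0 =>
  let ⟨v, huv, hv⟩ := hf u h0
  hu v huv hv

lemma IsRomanDominating.comp_iso {W : Type*} {H : SimpleGraph W} (e : G ≃g H) {f : W → Fin 3}
    (hf : IsRomanDominating H f) : IsRomanDominating G (f ∘ e) := by
  intro u hu
  obtain ⟨w, hw, hw2⟩ := hf (e u) hu
  exact ⟨e.symm w, by simpa using e.symm.map_adj_iff.2 hw, by simpa using hw2⟩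

lemma SimpleGraph.Iso.romanWeights_subset {W : Type*} {H : SimpleGraph W} (e : G ≃g H) :
    romanWeights H ⊆ romanWeights G := by
  rintro _ ⟨f, hf, hfin, rfl⟩
  exact ⟨f ∘ e, hf.comp_iso e, hfin.preimage e.injective.injOn,
    (finsum_comp_equiv e.toEquiv).symm⟩

lemma SimpleGraph.Iso.romanDominationNumber_eq {W : Type*} {H : SimpleGraph W} (e : G ≃g H) :
    romanDominationNumber G = romanDominationNumber H :=
  congrArg sInf (e.symm.romanWeights_subset.antisymm e.romanWeights_subset)

lemma two_mul_card_mem_romanWeights [DecidableEq V] (s : Finset V)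
    (hs : ∀ u ∉ s, ∃ v ∈ s, G.Adj u v) : 2 * s.card ∈ romanWeights G := by
  let f : V → Fin 3 := fun v => if v ∈ s then 2 else 0
  have hf : IsRomanDominating G f := fun u hu => by
    obtain ⟨v, hv, huv⟩ := hs u (by simpa [f] using hu)
    exact ⟨v, huv, if_pos hv⟩
  refine ⟨f, hf, s.finite_toSet.subset fun v => by simp [f], ?_⟩
  rw [finsum_eq_sum_of_support_subset _ (s := s) fun v => by simp [f]]
  calc 2 * s.card = ∑ _ ∈ s, 2 := by rw [Finset.sum_const, smul_eq_mul, mul_comm]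
    _ = ∑ v ∈ s, (f v : ℕ) := Finset.sum_congr rfl fun v hv => by simp [f, hv]

end RomanDomination

section CompleteBipartite

variable {V W : Type*}

lemma IsRomanDominating.four_le_finsum_completeBipartiteGraph (hV : 4 ≤ #V) (hW : 4 ≤ #W)
    {f : V ⊕ W → Fin 3} (hf : IsRomanDominating (completeBipartiteGraph V W) f)
    (hfin : {v | f v ≠ 0}.Finite) : 4 ≤ ∑ᶠ v, (f v : ℕ) := by
  classical
  obtain ⟨eV⟩ : Nonempty (Fin 4 ↪ V) := lift_mk_le'.1 (by simpa using hV)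
  obtain ⟨eW⟩ : Nonempty (Fin 4 ↪ W) := lift_mk_le'.1 (by simpa using hW)
  by_cases hl : ∃ a, f (.inl a) = 2
  · by_cases hr : ∃ b, f (.inr b) = 2
    · obtain ⟨⟨a, ha⟩, ⟨b, hb⟩⟩ := And.intro hl hr
      calc 4 = ∑ v ∈ {.inl a, .inr b}, (f v : ℕ) := by simp [ha, hb]
        _ ≤ _ := sum_le_finsum_fin_three hfin _
    · have hV0 (a : V) : f (.inl a) ≠ 0 := hf.ne_zero_of_forall_adj fun w hw => by
        obtain ⟨b, rfl⟩ := Sum.isRight_iff.1 (by simpa using hw)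
        exact fun h => hr ⟨b, h⟩
      simpa using card_le_finsum_fin_three hfin (T := Finset.univ.map (eV.trans .inl))
        (by simpa using fun i => hV0 (eV i))
  · have hW0 (b : W) : f (.inr b) ≠ 0 := hf.ne_zero_of_forall_adj fun w hw => by
      obtain ⟨a, rfl⟩ := Sum.isLeft_iff.1 (by simpa using hw)
      exact fun h => hl ⟨a, h⟩
    simpa using card_le_finsum_fin_three hfin (T := Finset.univ.map (eW.trans .inr))
      (by simpa using fun i => hW0 (eW i))

lemma isLeast_romanWeights_completeBipartiteGraph (hV : 4 ≤ #V) (hW : 4 ≤ #W) :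
    IsLeast (romanWeights (completeBipartiteGraph V W)) 4 := by
  classical
  refine ⟨?_, ?_⟩
  · obtain ⟨a⟩ : Nonempty V := mk_ne_zero_iff.1 fun h => by simp [h] at hV
    obtain ⟨b⟩ : Nonempty W := mk_ne_zero_iff.1 fun h => by simp [h] at hW
    have hcard : 2 * ({.inl a, .inr b} : Finset (V ⊕ W)).card = 4 := by simp
    refine hcard ▸ two_mul_card_mem_romanWeights _ ?_
    rintro (u | u) -
    · exact ⟨.inr b, by simp⟩
    · exact ⟨.inl a, by simp⟩
  · rintro _ ⟨f, hf, hfin, rfl⟩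
    exact hf.four_le_finsum_completeBipartiteGraph hV hW hfin

theorem romanDominationNumber_completeBipartiteGraph (hV : 4 ≤ #V) (hW : 4 ≤ #W) :
    romanDominationNumber (completeBipartiteGraph V W) = 4 :=
  (isLeast_romanWeights_completeBipartiteGraph hV hW).csInf_eq

end CompleteBipartite

theorem stmt_1_general (R₁ R₂ : Type*) [CommRing R₁] [CommRing R₂]
    (h₁ : (zdvSet R₁).Subsingleton) (h₂ : (zdvSet R₂).Subsingleton)
    (hc₁ : (5 : Cardinal) ≤ Cardinal.mk R₁) (hc₂ : (5 : Cardinal) ≤ Cardinal.mk R₂) :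
    romanDominationNumber (zeroDivisorGraph (R₁ × R₂)) = 4 := by
  have := isDomain_of_zdvSet_subsingleton h₁ hc₁
  have := isDomain_of_zdvSet_subsingleton h₂ hc₂
  rw [← (completeBipartiteGraphIsoZeroDivisorGraphProd R₁ R₂).romanDominationNumber_eq]
  exact romanDominationNumber_completeBipartiteGraph
    (le_mk_ne_of_add_one_le 0 (by norm_num [hc₁])) (le_mk_ne_of_add_one_le 0 (by norm_num [hc₂]))

theorem stmt_1 (R₁ R₂ : Type*) [CommRing R₁] [CommRing R₂]
    [Nontrivial R₁] [Nontrivial R₂]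
    (h₁ : (zdvSet R₁).Subsingleton) (h₂ : (zdvSet R₂).Subsingleton)
    (hc₁ : (5 : Cardinal) ≤ Cardinal.mk R₁) (hc₂ : (5 : Cardinal) ≤ Cardinal.mk R₂) :
    romanDominationNumber (zeroDivisorGraph (R₁ × R₂)) = 4 :=
  stmt_1_general R₁ R₂ h₁ h₂ hc₁ hc₂
end

section
/- Let R₁ and R₂ be commutative rings with identity, each having at least two nonzero zero-divisors and each satisfying xy = 0 for all zero-divisors x, y of Rᵢ (so each Γ(Rᵢ) is complete and has diameter 1). Then γ_R(Γ(R₁ × R₂)) = 4. -/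
/-!
The adjacent vertices `(a₁, 0)` and `(0, a₂)` dominate `Γ(R₁ × R₂)`: if `(x, y)` is killed by
`(s, t) ≠ 0`, then `x` (when `s ≠ 0`) or `y` (when `t ≠ 0`) is zero or a zero-divisor, so it
kills `a₁` resp. `a₂`. Putting weight `2` on both gives `γ_R ≤ 4`.

Conversely, every vertex has two non-neighbours other than itself: among `(1, 0), (1, a₂), (1, b₂)`
if its first coordinate is nonzero, and among `(0, 1), (a₁, 1), (b₁, 1)` otherwise. So a vertex of
value `2` has two non-neighbours that either both carry weight `≥ 1` or force a second vertex of
value `2`. Without value `2`, every vertex has value `≥ 1`, and an edge together with two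
non-neighbours of one of its endpoints gives four vertices.
-/

open Finset

theorem Finset.sum_le_finsum_s3 {α M : Type*} [AddCommMonoid M] [PartialOrder M]
    [CanonicallyOrderedAdd M] {f : α → M} (hf : f.HasFiniteSupport) (s : Finset α) :
    ∑ i ∈ s, f i ≤ ∑ᶠ i, f i := by
  classical
  calc ∑ i ∈ s, f i ≤ ∑ i ∈ s ∪ hf.toFinset, f i := sum_le_sum_of_subset subset_union_left
    _ = ∑ᶠ i, f i :=
      (finsum_eq_sum_of_support_toFinset_subset _ hf subset_union_right).symm

section RomanDomination

variable {V : Type*} {G : SimpleGraph V}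

theorem romanDominationNumber_eq {n : ℕ} (f : V → Fin 3) (hf : IsRomanDominating G f)
    (hfin : {v | f v ≠ 0}.Finite) (hn : ∑ᶠ v, (f v : ℕ) = n)
    (hmin : ∀ g : V → Fin 3, IsRomanDominating G g → {v | g v ≠ 0}.Finite →
      n ≤ ∑ᶠ v, (g v : ℕ)) :
    romanDominationNumber G = n :=
  le_antisymm (Nat.sInf_le ⟨f, hf, hfin, hn.symm⟩)
    (le_csInf ⟨n, f, hf, hfin, hn.symm⟩ fun _ ⟨g, hg, hgfin, hw⟩ ↦ hw ▸ hmin g hg hgfin)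

theorem four_le_finsum_of_isRomanDominating {f : V → Fin 3} (hf : IsRomanDominating G f)
    (hfin : {v | f v ≠ 0}.Finite) (hedge : ∃ v w, G.Adj v w)
    (hnon : ∀ v, ∃ p q, p ≠ q ∧ Gᶜ.Adj v p ∧ Gᶜ.Adj v q) :
    4 ≤ ∑ᶠ v, (f v : ℕ) := by
  classical
  have hsum (s : Finset V) : ∑ v ∈ s, (f v : ℕ) ≤ ∑ᶠ v, (f v : ℕ) :=
    sum_le_finsum_s3 (hfin.subset fun v hv h ↦ hv (by simp [h])) s
  have hpos {v} (h : f v ≠ 0) : 1 ≤ (f v : ℕ) := by omega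
  by_cases htwo : ∃ v₀, f v₀ = 2
  · obtain ⟨v₀, hv₀⟩ := htwo
    obtain ⟨p, q, hpq, hp, hq⟩ := hnon v₀
    have four_le_of_zero {u} (hu : Gᶜ.Adj v₀ u) (hfu : f u = 0) : 4 ≤ ∑ᶠ v, (f v : ℕ) := by
      obtain ⟨w, huw, hw⟩ := hf u hfu
      have hwv₀ : v₀ ≠ w := by rintro rfl; exact hu.2 huw.symm
      calc 4 = ∑ v ∈ {v₀, w}, (f v : ℕ) := by simp [sum_pair hwv₀, hv₀, hw]
        _ ≤ _ := hsum _
    by_cases hfp : f p = 0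
    · exact four_le_of_zero hp hfp
    by_cases hfq : f q = 0
    · exact four_le_of_zero hq hfq
    calc 4 ≤ (f v₀ : ℕ) + ((f p : ℕ) + f q) := by
          have := hpos hfp
          have := hpos hfq
          simp [hv₀]
          omega
      _ = ∑ v ∈ {v₀, p, q}, (f v : ℕ) := by
        rw [sum_insert (by simp [hp.1, hq.1]), sum_pair hpq]
      _ ≤ _ := hsum _
  · push Not at htwo
    have hall (v) : f v ≠ 0 := fun h ↦ by obtain ⟨w, -, hw⟩ := hf v h; exact htwo w hw
    obtain ⟨v₀, w₀, hvw⟩ := hedge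
    obtain ⟨p, q, hpq, hp, hq⟩ := hnon v₀
    have hwp : w₀ ≠ p := by rintro rfl; exact hp.2 hvw
    have hwq : w₀ ≠ q := by rintro rfl; exact hq.2 hvw
    have hcard : #{v₀, w₀, p, q} = 4 := by
      rw [card_insert_of_notMem (by simp [hvw.ne, hp.1, hq.1]),
        card_insert_of_notMem (by simp [hwp, hwq]), card_pair hpq]
    calc 4 = #{v₀, w₀, p, q} • 1 := by simp [hcard]
      _ ≤ ∑ v ∈ {v₀, w₀, p, q}, (f v : ℕ) := card_nsmul_le_sum _ _ _ fun v _ ↦ hpos (hall v)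
      _ ≤ _ := hsum _

theorem SimpleGraph.exists_compl_adj_of_three {v u₁ u₂ u₃ : V} (h₁₂ : u₁ ≠ u₂) (h₁₃ : u₁ ≠ u₃)
    (h₂₃ : u₂ ≠ u₃) (h₁ : ¬G.Adj v u₁) (h₂ : ¬G.Adj v u₂) (h₃ : ¬G.Adj v u₃) :
    ∃ p q, p ≠ q ∧ Gᶜ.Adj v p ∧ Gᶜ.Adj v q := by
  simp only [SimpleGraph.compl_adj]
  by_cases hv₁ : v = u₁
  · subst hv₁; exact ⟨u₂, u₃, h₂₃, ⟨h₁₂, h₂⟩, ⟨h₁₃, h₃⟩⟩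
  by_cases hv₂ : v = u₂
  · subst hv₂; exact ⟨u₁, u₃, h₁₃, ⟨Ne.symm h₁₂, h₁⟩, ⟨h₂₃, h₃⟩⟩
  exact ⟨u₁, u₂, h₁₂, ⟨hv₁, h₁⟩, ⟨hv₂, h₂⟩⟩

variable [DecidableEq V]

def twoOn (D : Finset V) (v : V) : Fin 3 := if v ∈ D then 2 else 0

theorem isRomanDominating_twoOn {D : Finset V} (hD : ∀ u ∉ D, ∃ v ∈ D, G.Adj u v) :
    IsRomanDominating G (twoOn D) := by
  intro u hu
  have hu : u ∉ D := fun h ↦ by simp [twoOn, h] at hu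
  obtain ⟨v, hv, huv⟩ := hD u hu
  exact ⟨v, huv, if_pos hv⟩

theorem finite_twoOn_ne_zero (D : Finset V) : {v | twoOn D v ≠ 0}.Finite :=
  D.finite_toSet.subset fun _ hv ↦ by_contra fun h ↦ hv (if_neg h)

theorem finsum_twoOn (D : Finset V) : ∑ᶠ v, (twoOn D v : ℕ) = 2 * #D := by
  rw [finsum_eq_sum_of_support_subset (s := D) _
    fun _ hv ↦ by_contra fun h ↦ by simp_all [twoOn]]
  calc ∑ v ∈ D, (twoOn D v : ℕ) = ∑ _v ∈ D, 2 := sum_congr rfl fun v hv ↦ by simp [twoOn, hv]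
    _ = 2 * #D := by rw [sum_const, smul_eq_mul, mul_comm]

end RomanDomination

section ZeroDivisorGraph

variable {R R₁ R₂ : Type*} [CommRing R] [CommRing R₁] [CommRing R₂]

theorem mul_eq_zero_of_mem_zdvSet (hc : ∀ x ∈ zdvSet R, ∀ y ∈ zdvSet R, x * y = 0)
    {a x y : R} (ha : a ∈ zdvSet R) (hy : y ≠ 0) (hxy : x * y = 0) : x * a = 0 := by
  by_cases hx : x = 0
  · rw [hx, zero_mul]
  · exact hc x ⟨hx, y, hy, hxy⟩ a ha

theorem Prod.mk_mem_zdvSet_of_ne_zero_left {x : R₁} {z y : R₂} (hx : x ≠ 0) (hy : y ≠ 0)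
    (hzy : z * y = 0) : (x, z) ∈ zdvSet (R₁ × R₂) :=
  ⟨fun h ↦ hx congr($h.1), (0, y), fun h ↦ hy congr($h.2), by simp [hzy]⟩

theorem Prod.mk_mem_zdvSet_of_ne_zero_right {z y : R₁} {x : R₂} (hx : x ≠ 0) (hy : y ≠ 0)
    (hzy : z * y = 0) : (z, x) ∈ zdvSet (R₁ × R₂) :=
  ⟨fun h ↦ hx congr($h.2), (y, 0), fun h ↦ hy congr($h.1), by simp [hzy]⟩

theorem mul_eq_zero_or_mul_eq_zero_of_mem_zdvSet_prod
    (hc₁ : ∀ x ∈ zdvSet R₁, ∀ y ∈ zdvSet R₁, x * y = 0)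
    (hc₂ : ∀ x ∈ zdvSet R₂, ∀ y ∈ zdvSet R₂, x * y = 0) {a₁ : R₁} {a₂ : R₂}
    (ha₁ : a₁ ∈ zdvSet R₁) (ha₂ : a₂ ∈ zdvSet R₂) {u : R₁ × R₂} (hu : u ∈ zdvSet (R₁ × R₂)) :
    u * (a₁, 0) = 0 ∨ u * (0, a₂) = 0 := by
  obtain ⟨-, ⟨y₁, y₂⟩, hy, huy⟩ := hu
  by_cases hy₁ : y₁ = 0
  · have hy₂ : y₂ ≠ 0 := fun h ↦ hy (by rw [hy₁, h, Prod.mk_zero_zero])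
    exact Or.inr (Prod.ext (mul_zero _) (mul_eq_zero_of_mem_zdvSet hc₂ ha₂ hy₂ congr($huy.2)))
  · exact Or.inl (Prod.ext (mul_eq_zero_of_mem_zdvSet hc₁ ha₁ hy₁ congr($huy.1)) (mul_zero _))

theorem exists_compl_adj_zeroDivisorGraph_prod
    (h₁ : ∃ a b : R₁, a ≠ b ∧ a ∈ zdvSet R₁ ∧ b ∈ zdvSet R₁)
    (h₂ : ∃ a b : R₂, a ≠ b ∧ a ∈ zdvSet R₂ ∧ b ∈ zdvSet R₂) (v : zdvSet (R₁ × R₂)) :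
    ∃ p q, p ≠ q ∧ (zeroDivisorGraph (R₁ × R₂))ᶜ.Adj v p ∧
      (zeroDivisorGraph (R₁ × R₂))ᶜ.Adj v q := by
  obtain ⟨a₁, b₁, hab₁, ⟨ha₁, a₁', ha₁', haa₁⟩, ⟨hb₁, b₁', hb₁', hbb₁⟩⟩ := h₁
  obtain ⟨a₂, b₂, hab₂, ⟨ha₂, a₂', ha₂', haa₂⟩, ⟨hb₂, b₂', hb₂', hbb₂⟩⟩ := h₂
  have : Nontrivial R₁ := nontrivial_of_ne a₁ 0 ha₁
  have : Nontrivial R₂ := nontrivial_of_ne a₂ 0 ha₂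
  by_cases hv : (v : R₁ × R₂).1 ≠ 0
  · have hnadj (w : zdvSet (R₁ × R₂)) (hw : (w : R₁ × R₂).1 = 1) :
        ¬(zeroDivisorGraph _).Adj v w :=
      fun ⟨_, h⟩ ↦ hv (by simpa [hw] using congr($h.1))
    refine SimpleGraph.exists_compl_adj_of_three
      (u₁ := ⟨(1, 0), Prod.mk_mem_zdvSet_of_ne_zero_left one_ne_zero ha₂ (zero_mul a₂)⟩)
      (u₂ := ⟨(1, a₂), Prod.mk_mem_zdvSet_of_ne_zero_left one_ne_zero ha₂' haa₂⟩)
      (u₃ := ⟨(1, b₂), Prod.mk_mem_zdvSet_of_ne_zero_left one_ne_zero hb₂' hbb₂⟩)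
      ?_ ?_ ?_ (hnadj _ rfl) (hnadj _ rfl) (hnadj _ rfl) <;>
    simp [Subtype.ext_iff, ha₂.symm, hb₂.symm, hab₂]
  · have hv : (v : R₁ × R₂).2 ≠ 0 := fun h ↦ v.2.1 (Prod.ext (not_not.1 hv) h)
    have hnadj (w : zdvSet (R₁ × R₂)) (hw : (w : R₁ × R₂).2 = 1) :
        ¬(zeroDivisorGraph _).Adj v w :=
      fun ⟨_, h⟩ ↦ hv (by simpa [hw] using congr($h.2))
    refine SimpleGraph.exists_compl_adj_of_three
      (u₁ := ⟨(0, 1), Prod.mk_mem_zdvSet_of_ne_zero_right one_ne_zero ha₁ (zero_mul a₁)⟩)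
      (u₂ := ⟨(a₁, 1), Prod.mk_mem_zdvSet_of_ne_zero_right one_ne_zero ha₁' haa₁⟩)
      (u₃ := ⟨(b₁, 1), Prod.mk_mem_zdvSet_of_ne_zero_right one_ne_zero hb₁' hbb₁⟩)
      ?_ ?_ ?_ (hnadj _ rfl) (hnadj _ rfl) (hnadj _ rfl) <;>
    simp [Subtype.ext_iff, ha₁.symm, hb₁.symm, hab₁]

end ZeroDivisorGraph

theorem stmt_3 (R₁ R₂ : Type*) [CommRing R₁] [CommRing R₂]
    (h₁ : ∃ a b : R₁, a ≠ b ∧ a ∈ zdvSet R₁ ∧ b ∈ zdvSet R₁)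
    (h₂ : ∃ a b : R₂, a ≠ b ∧ a ∈ zdvSet R₂ ∧ b ∈ zdvSet R₂)
    (hc₁ : ∀ x ∈ zdvSet R₁, ∀ y ∈ zdvSet R₁, x * y = 0)
    (hc₂ : ∀ x ∈ zdvSet R₂, ∀ y ∈ zdvSet R₂, x * y = 0) :
    romanDominationNumber (zeroDivisorGraph (R₁ × R₂)) = 4 := by
  classical
  have hnon := exists_compl_adj_zeroDivisorGraph_prod h₁ h₂
  obtain ⟨a₁, -, -, ha₁, -⟩ := h₁
  obtain ⟨a₂, -, -, ha₂, -⟩ := h₂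
  let A : zdvSet (R₁ × R₂) :=
    ⟨(a₁, 0), Prod.mk_mem_zdvSet_of_ne_zero_left ha₁.1 ha₂.1 (zero_mul a₂)⟩
  let B : zdvSet (R₁ × R₂) :=
    ⟨(0, a₂), Prod.mk_mem_zdvSet_of_ne_zero_right ha₂.1 ha₁.1 (zero_mul a₁)⟩
  have hAB : (zeroDivisorGraph (R₁ × R₂)).Adj A B :=
    ⟨by simp [A, B, Subtype.ext_iff, ha₁.1], by simp [A, B]⟩
  have hdom (u) (hu : u ∉ ({A, B} : Finset _)) :
      ∃ v ∈ ({A, B} : Finset _), (zeroDivisorGraph _).Adj u v := by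
    simp only [mem_insert, mem_singleton, not_or] at hu
    rcases mul_eq_zero_or_mul_eq_zero_of_mem_zdvSet_prod hc₁ hc₂ ha₁ ha₂ u.2 with h | h
    · exact ⟨A, by simp, hu.1, h⟩
    · exact ⟨B, by simp, hu.2, h⟩
  exact romanDominationNumber_eq _ (isRomanDominating_twoOn hdom) (finite_twoOn_ne_zero _)
    (by rw [finsum_twoOn, card_pair hAB.ne]) fun g hg hgfin ↦
      four_le_finsum_of_isRomanDominating hg hgfin ⟨A, B, hAB⟩ hnon
end

section
/- Let R₁ and R₂ be finite commutative local rings with identity whose maximal ideals are principal, generated respectively by x₁ and x₂. Suppose R₁ has at least two nonzero zero-divisors (so Γ(R₁) has diameter 1 or 2) and x₂² ≠ 0 (so Γ(R₂) has diameter 2). Then γ_R(Γ(R₁ × R₂)) = 4. -/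
/-! In a finite local ring the maximal ideal is an associated prime, so it has a nonzero
annihilator `eᵢ`; and a vertex `(a, b)` of `Γ(R₁ × R₂)` is a nonzero pair with `a` or `b` a
nonunit. Hence `{(e₁, 0), (0, e₂)}` dominates the graph, and labelling it by `2` has weight `4`.

Conversely, with `x = x₂`, every vertex has two distinct non-neighbours: two of `(1, 0)`, `(1, x)`,
`(1, x²)` if its first coordinate is nonzero, two of `(0, 1)`, `(0, 1 - x)`, `(0, 1 - x²)`
otherwise. So if one vertex is labelled `2`, two of its non-neighbours carry `1` each; if none
is, all (at least four) vertices are labelled `1`. -/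

open IsLocalRing SimpleGraph Finset

theorem mem_zdvSet_iff_of_finite {R : Type*} [CommRing R] [Finite R] {x : R} :
    x ∈ zdvSet R ↔ x ≠ 0 ∧ ¬IsUnit x := by
  simp [zdvSet, isUnit_iff_mem_nonZeroDivisors_of_finite, mem_nonZeroDivisors_iff_right, mul_comm x,
    and_comm]

theorem zero_mk_mem_zdvSet_prod {R₁ R₂ : Type*} [CommRing R₁] [Nontrivial R₁] [CommRing R₂]
    {b : R₂} (hb : b ≠ 0) : ((0, b) : R₁ × R₂) ∈ zdvSet (R₁ × R₂) :=
  ⟨by simp [hb], (1, 0), by simp, by simp⟩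

theorem IsLocalRing.exists_ne_zero_mul_eq_zero_of_mem_maximalIdeal (R : Type*) [CommRing R]
    [IsArtinianRing R] [IsLocalRing R] : ∃ e : R, e ≠ 0 ∧ ∀ a ∈ maximalIdeal R, a * e = 0 := by
  obtain ⟨P, hP⟩ := associatedPrimes.nonempty R R
  obtain ⟨hPrime, e, rfl⟩ := isAssociatedPrime_iff.mp hP
  have hPm := eq_maximalIdeal (IsArtinianRing.isMaximal_of_isPrime ((⊥ : Submodule R R).colon {e}))
  refine ⟨e, ?_, fun a ha => ?_⟩
  · rintro rfl
    exact hPrime.ne_top (by ext; simp [Submodule.mem_colon_singleton])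
  · rw [← hPm, Submodule.mem_colon_singleton] at ha
    simpa using ha

theorem IsLocalRing.ne_sq_of_mem_maximalIdeal {R : Type*} [CommRing R] [IsLocalRing R] {x : R}
    (hx : x ∈ maximalIdeal R) (hx2 : x ^ 2 ≠ 0) : x ≠ x ^ 2 := by
  intro h
  have hx0 : x * (1 - x) = 0 := by linear_combination h
  rw [(isUnit_one_sub_self_of_mem_nonunits x hx).mul_left_eq_zero] at hx0
  exact ne_zero_pow two_ne_zero hx2 hx0

section RomanDomination

variable {V : Type*} (G : SimpleGraph V)

theorem romanDominationNumber_le_two_mul_card (S : Finset V)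
    (hS : ∀ u ∉ S, ∃ v ∈ S, G.Adj u v) : romanDominationNumber G ≤ 2 * #S := by
  classical
  let f : V → Fin 3 := fun v => if v ∈ S then 2 else 0
  have hsupp : {v | f v ≠ 0} ⊆ S := fun v hv => by by_contra h; simp [f, h] at hv
  refine Nat.sInf_le ⟨f, fun u hu => ?_, S.finite_toSet.subset hsupp, ?_⟩
  · obtain ⟨v, hv, huv⟩ := hS u (by simpa [f] using hu)
    exact ⟨v, huv, if_pos hv⟩
  · rw [finsum_eq_sum_of_support_subset _ (s := S) (fun v hv => hsupp (by simpa using hv)),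
      sum_congr rfl fun v hv => (by simp [f, hv] : (f v : ℕ) = 2), sum_const, smul_eq_mul,
      mul_comm]

theorem four_le_romanDominationNumber [Finite V] (hV : 4 ≤ Nat.card V)
    (hG : ∀ v, ∃ u₁ u₂, u₁ ≠ u₂ ∧ Gᶜ.Adj v u₁ ∧ Gᶜ.Adj v u₂) :
    4 ≤ romanDominationNumber G := by
  classical
  have := Fintype.ofFinite V
  refine le_csInf ⟨_, fun _ => (1 : Fin 3), fun _ h => absurd h one_ne_zero, Set.toFinite _, rfl⟩ ?_
  rintro _ ⟨f, hf, -, rfl⟩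
  rw [finsum_eq_sum_of_fintype]
  have hsum (s : Finset V) : ∑ v ∈ s, (f v : ℕ) ≤ ∑ v, (f v : ℕ) :=
    sum_le_sum_of_subset (subset_univ s)
  have hpos (v : V) (hv : f v ≠ 0) : 1 ≤ (f v : ℕ) :=
    Nat.one_le_iff_ne_zero.mpr fun h => hv (Fin.ext h)
  by_cases h2 : ∃ v, f v = 2
  · obtain ⟨v, hv⟩ := h2
    by_cases h2' : ∃ w ≠ v, f w = 2
    · obtain ⟨w, hwv, hw⟩ := h2'
      calc 4 = ∑ u ∈ {w, v}, (f u : ℕ) := by rw [sum_pair hwv, hv, hw]; rfl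
        _ ≤ _ := hsum _
    · push Not at h2'
      obtain ⟨u₁, u₂, hne, hu₁, hu₂⟩ := hG v
      have hnz (u : V) (hu : Gᶜ.Adj v u) : f u ≠ 0 := by
        intro h0
        obtain ⟨w, huw, hw⟩ := hf u h0
        have hwv : w = v := by_contra fun h => h2' w h hw
        exact ((compl_adj G v u).mp hu).2 (hwv ▸ huw.symm)
      calc 4 ≤ (f v : ℕ) + ((f u₁ : ℕ) + f u₂) := by
            have hv' : (f v : ℕ) = 2 := by rw [hv]; rfl
            linarith [hpos _ (hnz _ hu₁), hpos _ (hnz _ hu₂)]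
        _ = ∑ u ∈ {v, u₁, u₂}, (f u : ℕ) := by
            rw [sum_insert (by simp [hu₁.ne, hu₂.ne]), sum_pair hne]
        _ ≤ _ := hsum _
  · push Not at h2
    have hnz (u : V) : f u ≠ 0 := fun h0 => (hf u h0).elim fun w hw => h2 w hw.2
    calc 4 ≤ Nat.card V := hV
      _ = ∑ _ : V, 1 := by simp [Nat.card_eq_fintype_card]
      _ ≤ ∑ u, (f u : ℕ) := sum_le_sum fun u _ => hpos u (hnz u)

variable {G}

theorem exists_two_compl_adj_of_three {v a b c : V} (hab : a ≠ b) (hac : a ≠ c) (hbc : b ≠ c)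
    (ha : ¬G.Adj v a) (hb : ¬G.Adj v b) (hc : ¬G.Adj v c) :
    ∃ u₁ u₂, u₁ ≠ u₂ ∧ Gᶜ.Adj v u₁ ∧ Gᶜ.Adj v u₂ := by
  simp only [compl_adj]
  by_cases hva : v = a
  · subst hva
    exact ⟨b, c, hbc, ⟨hab, hb⟩, ⟨hac, hc⟩⟩
  by_cases hvb : v = b
  · subst hvb
    exact ⟨a, c, hac, ⟨hab.symm, ha⟩, ⟨hbc, hc⟩⟩
  · exact ⟨a, b, hab, ⟨hva, ha⟩, ⟨hvb, hb⟩⟩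

end RomanDomination

section ProductOfLocalRings

variable {R₁ R₂ : Type*} [CommRing R₁] [CommRing R₂] [Finite R₁] [Finite R₂]
  [IsLocalRing R₁] [IsLocalRing R₂]

theorem one_mk_mem_zdvSet_prod {t : R₂} (ht : t ∈ maximalIdeal R₂) :
    ((1, t) : R₁ × R₂) ∈ zdvSet (R₁ × R₂) := by
  rw [mem_zdvSet_iff_of_finite, Prod.isUnit_iff]
  exact ⟨by simp [Prod.ext_iff], fun h => ht h.2⟩

theorem romanDominationNumber_zeroDivisorGraph_prod_le_four :
    romanDominationNumber (zeroDivisorGraph (R₁ × R₂)) ≤ 4 := by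
  classical
  obtain ⟨e₁, he₁, hann₁⟩ := exists_ne_zero_mul_eq_zero_of_mem_maximalIdeal R₁
  obtain ⟨e₂, he₂, hann₂⟩ := exists_ne_zero_mul_eq_zero_of_mem_maximalIdeal R₂
  have h₁ : ((e₁, 0) : R₁ × R₂) ∈ zdvSet (R₁ × R₂) := ⟨by simp [he₁], (0, 1), by simp, by simp⟩
  refine (romanDominationNumber_le_two_mul_card _ {⟨_, h₁⟩, ⟨_, zero_mk_mem_zdvSet_prod he₂⟩}
    fun u hu => ?_).trans (by grw [card_le_two])
  simp only [mem_insert, mem_singleton, not_or] at hu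
  obtain ⟨-, hunit⟩ := mem_zdvSet_iff_of_finite.mp u.2
  rcases not_and_or.mp (Prod.isUnit_iff.not.mp hunit) with h | h
  · exact ⟨_, by simp, hu.1, Prod.ext (hann₁ _ h) (mul_zero _)⟩
  · exact ⟨_, by simp, hu.2, Prod.ext (mul_zero _) (hann₂ _ h)⟩

variable {x : R₂}

theorem four_le_card_zdvSet_prod (hx : x ∈ maximalIdeal R₂) (hx2 : x ^ 2 ≠ 0) :
    4 ≤ Nat.card (zdvSet (R₁ × R₂)) := by
  classical
  have := Fintype.ofFinite (zdvSet (R₁ × R₂))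
  have hx2m : x ^ 2 ∈ maximalIdeal R₂ := Ideal.pow_mem_of_mem _ hx 2 two_pos
  let s : Finset (zdvSet (R₁ × R₂)) :=
    {⟨_, zero_mk_mem_zdvSet_prod one_ne_zero⟩, ⟨_, one_mk_mem_zdvSet_prod (zero_mem _)⟩,
      ⟨_, one_mk_mem_zdvSet_prod hx⟩, ⟨_, one_mk_mem_zdvSet_prod hx2m⟩}
  have hs : #s = 4 := by
    rw [card_eq_four]
    refine ⟨_, _, _, _, ?_, ?_, ?_, ?_, ?_, ?_, rfl⟩ <;>
      simp [(ne_zero_pow two_ne_zero hx2).symm, hx2.symm, ne_sq_of_mem_maximalIdeal hx hx2]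
  rw [Nat.card_eq_fintype_card, ← hs]
  exact card_le_univ s

theorem exists_two_compl_adj_zeroDivisorGraph_prod (hx : x ∈ maximalIdeal R₂) (hx2 : x ^ 2 ≠ 0)
    (v : zdvSet (R₁ × R₂)) :
    ∃ u₁ u₂, u₁ ≠ u₂ ∧ (zeroDivisorGraph (R₁ × R₂))ᶜ.Adj v u₁ ∧
      (zeroDivisorGraph (R₁ × R₂))ᶜ.Adj v u₂ := by
  have hx0 := ne_zero_pow two_ne_zero hx2
  have hxx := ne_sq_of_mem_maximalIdeal hx hx2
  have hx2m : x ^ 2 ∈ maximalIdeal R₂ := Ideal.pow_mem_of_mem _ hx 2 two_pos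
  have hnadj {u : zdvSet (R₁ × R₂)} (h : (v : R₁ × R₂) * u ≠ 0) :
      ¬(zeroDivisorGraph (R₁ × R₂)).Adj v u := fun h' => h h'.2
  obtain ⟨⟨a, b⟩, hv⟩ := v
  by_cases ha : a = 0
  · subst ha
    have hb : b ≠ 0 := by rintro rfl; exact hv.1 rfl
    have hunit (t : R₂) (ht : t ∈ maximalIdeal R₂) : IsUnit (1 - t) :=
      isUnit_one_sub_self_of_mem_nonunits t ht
    have hprod (t : R₂) (ht : t ∈ maximalIdeal R₂) : b * (1 - t) ≠ 0 :=
      (hunit t ht).mul_left_eq_zero.not.mpr hb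
    exact exists_two_compl_adj_of_three
      (a := ⟨_, zero_mk_mem_zdvSet_prod (hunit 0 (zero_mem _)).ne_zero⟩)
      (b := ⟨_, zero_mk_mem_zdvSet_prod (hunit x hx).ne_zero⟩)
      (c := ⟨_, zero_mk_mem_zdvSet_prod (hunit _ hx2m).ne_zero⟩)
      (by simp [eq_sub_iff_add_eq, hx0]) (by simp [eq_sub_iff_add_eq, hx2]) (by simp [hxx])
      (hnadj (by simpa [Prod.ext_iff] using hprod 0 (zero_mem _)))
      (hnadj (by simpa [Prod.ext_iff] using hprod x hx))
      (hnadj (by simpa [Prod.ext_iff] using hprod _ hx2m))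
  · exact exists_two_compl_adj_of_three
      (a := ⟨_, one_mk_mem_zdvSet_prod (zero_mem _)⟩)
      (b := ⟨_, one_mk_mem_zdvSet_prod hx⟩)
      (c := ⟨_, one_mk_mem_zdvSet_prod hx2m⟩)
      (by simp [hx0.symm]) (by simp [hx2.symm]) (by simp [hxx])
      (hnadj (by simp [Prod.ext_iff, ha])) (hnadj (by simp [Prod.ext_iff, ha]))
      (hnadj (by simp [Prod.ext_iff, ha]))

end ProductOfLocalRings

theorem stmt_5_general (R₁ R₂ : Type*) [CommRing R₁] [CommRing R₂]
    [Finite R₁] [Finite R₂] [IsLocalRing R₁] [IsLocalRing R₂]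
    (x₂ : R₂)
    (hp₂ : IsLocalRing.maximalIdeal R₂ = Ideal.span {x₂})
    (hx₂ : x₂ ^ 2 ≠ 0) :
    romanDominationNumber (zeroDivisorGraph (R₁ × R₂)) = 4 := by
  have hx : x₂ ∈ maximalIdeal R₂ := hp₂ ▸ Ideal.mem_span_singleton_self x₂
  exact romanDominationNumber_zeroDivisorGraph_prod_le_four.antisymm <|
    four_le_romanDominationNumber _ (four_le_card_zdvSet_prod (R₁ := R₁) hx hx₂)
      (exists_two_compl_adj_zeroDivisorGraph_prod hx hx₂)

theorem stmt_5 (R₁ R₂ : Type*) [CommRing R₁] [CommRing R₂]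
    [Finite R₁] [Finite R₂] [IsLocalRing R₁] [IsLocalRing R₂]
    (x₁ : R₁) (x₂ : R₂)
    (hp₁ : IsLocalRing.maximalIdeal R₁ = Ideal.span {x₁})
    (hp₂ : IsLocalRing.maximalIdeal R₂ = Ideal.span {x₂})
    (htwo : ∃ a b : R₁, a ≠ b ∧ a ∈ zdvSet R₁ ∧ b ∈ zdvSet R₁)
    (hx₂ : x₂ ^ 2 ≠ 0) :
    romanDominationNumber (zeroDivisorGraph (R₁ × R₂)) = 4 :=
  stmt_5_general R₁ R₂ x₂ hp₂ hx₂
end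

section
/- Let R₁ and R₂ be commutative rings whose zero-divisor graphs Γ(R₁) and Γ(R₂) are finite and nonempty, with m and n vertices and maximum degrees r₁ and r₂, respectively. Then γ_R(Γ(R₁) □ Γ(R₂)) ≤ mn − r₁ − r₂ + 1. -/
/-- `r` is the maximum degree of `G` (degree measured as the `ncard` of the
neighbour set). -/
def IsMaxDegree {V : Type*} (G : SimpleGraph V) (r : ℕ) : Prop :=
  (∃ v, (G.neighborSet v).ncard = r) ∧ ∀ v, (G.neighborSet v).ncard ≤ r

/-! Weight `2` on a vertex `v` of any finite graph, `0` on its neighbours and `1` elsewhere is a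
Roman dominating function of weight `|V| - deg v + 1`. In `Γ(R₁) □ Γ(R₂)` the vertex `(a, b)`, with
`a`, `b` of maximum degree, has degree `r₁ + r₂`. -/

section

open Finset

variable {V : Type*}

theorem romanDominationNumber_le_finsum (G : SimpleGraph V) {f : V → Fin 3}
    (hf : IsRomanDominating G f) (hsupp : {v | f v ≠ 0}.Finite) :
    romanDominationNumber G ≤ ∑ᶠ v, (f v : ℕ) :=
  Nat.sInf_le ⟨f, hf, hsupp, rfl⟩

def starRomanFunction (G : SimpleGraph V) [DecidableEq V] [DecidableRel G.Adj] (a : V) :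
    V → Fin 3 :=
  fun v => if v = a then 2 else if G.Adj a v then 0 else 1

section Star

variable (G : SimpleGraph V) [DecidableEq V] [DecidableRel G.Adj] (a : V)

theorem isRomanDominating_starRomanFunction :
    IsRomanDominating G (starRomanFunction G a) := by
  intro u hu
  refine ⟨a, ?_, if_pos rfl⟩
  unfold starRomanFunction at hu
  by_contra hna
  split_ifs at hu <;> simp_all [G.adj_comm]

theorem starRomanFunction_add_ite_adj (v : V) :
    (starRomanFunction G a v : ℕ) + (if G.Adj a v then 1 else 0) =
      1 + if v = a then 1 else 0 := by
  unfold starRomanFunction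
  split_ifs <;> simp_all

theorem sum_starRomanFunction_add_degree [Fintype V] :
    ∑ v, (starRomanFunction G a v : ℕ) + G.degree a = Fintype.card V + 1 := by
  have h := sum_congr rfl fun v (_ : v ∈ univ) => starRomanFunction_add_ite_adj G a v
  rw [sum_add_distrib, sum_add_distrib] at h
  rw [← SimpleGraph.card_neighborFinset_eq_degree, SimpleGraph.neighborFinset_eq_filter]
  simpa [sum_boole, add_comm] using h

end Star

theorem romanDominationNumber_add_ncard_neighborSet_le [Finite V] (G : SimpleGraph V) (a : V) :
    romanDominationNumber G + (G.neighborSet a).ncard ≤ Nat.card V + 1 := by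
  classical
  have := Fintype.ofFinite V
  have hle := romanDominationNumber_le_finsum G (isRomanDominating_starRomanFunction G a)
    (Set.toFinite _)
  rw [finsum_eq_sum_of_fintype] at hle
  rw [Set.ncard_eq_toFinset_card', ← SimpleGraph.neighborFinset_def, Nat.card_eq_fintype_card,
    SimpleGraph.card_neighborFinset_eq_degree]
  have := sum_starRomanFunction_add_degree G a
  omega

theorem SimpleGraph.ncard_neighborSet_boxProd {W : Type*} (G : SimpleGraph V)
    (H : SimpleGraph W) (x : V × W) (hG : (G.neighborSet x.1).Finite)
    (hH : (H.neighborSet x.2).Finite) :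
    ((G □ H).neighborSet x).ncard = (G.neighborSet x.1).ncard + (H.neighborSet x.2).ncard := by
  rw [SimpleGraph.neighborSet_boxProd, Set.ncard_union_eq
    (Set.disjoint_prod.mpr (Or.inl (by simp))) (hG.prod (Set.finite_singleton _))
    ((Set.finite_singleton _).prod hH), Set.ncard_prod, Set.ncard_prod]
  simp

end

theorem stmt_6_general (R₁ R₂ : Type*) [CommRing R₁] [CommRing R₂] (m n r₁ r₂ : ℕ)
    (hfin₁ : (zdvSet R₁).Finite) (hfin₂ : (zdvSet R₂).Finite)
    (hm : (zdvSet R₁).ncard = m) (hn : (zdvSet R₂).ncard = n)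
    (hr₁ : IsMaxDegree (zeroDivisorGraph R₁) r₁)
    (hr₂ : IsMaxDegree (zeroDivisorGraph R₂) r₂) :
    romanDominationNumber (zeroDivisorGraph R₁ □ zeroDivisorGraph R₂)
      ≤ m * n - r₁ - r₂ + 1 := by
  have := hfin₁.to_subtype
  have := hfin₂.to_subtype
  obtain ⟨⟨a, rfl⟩, -⟩ := hr₁
  obtain ⟨⟨b, rfl⟩, -⟩ := hr₂
  have hbound := romanDominationNumber_add_ncard_neighborSet_le
    (zeroDivisorGraph R₁ □ zeroDivisorGraph R₂) (a, b)
  rw [SimpleGraph.ncard_neighborSet_boxProd _ _ _ (Set.toFinite _) (Set.toFinite _),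
    Nat.card_prod, Nat.card_coe_set_eq, Nat.card_coe_set_eq, hm, hn] at hbound
  dsimp only at hbound
  omega

theorem stmt_6 (R₁ R₂ : Type*) [CommRing R₁] [CommRing R₂] (m n r₁ r₂ : ℕ)
    (hfin₁ : (zdvSet R₁).Finite) (hfin₂ : (zdvSet R₂).Finite)
    (hne₁ : (zdvSet R₁).Nonempty) (hne₂ : (zdvSet R₂).Nonempty)
    (hm : (zdvSet R₁).ncard = m) (hn : (zdvSet R₂).ncard = n)
    (hr₁ : IsMaxDegree (zeroDivisorGraph R₁) r₁)
    (hr₂ : IsMaxDegree (zeroDivisorGraph R₂) r₂) :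
    romanDominationNumber (zeroDivisorGraph R₁ □ zeroDivisorGraph R₂)
      ≤ m * n - r₁ - r₂ + 1 :=
  stmt_6_general R₁ R₂ m n r₁ r₂ hfin₁ hfin₂ hm hn hr₁ hr₂
end

section
/- Let n = p^{m₁} q^{m₂} where p and q are distinct primes and m₁, m₂ are positive integers, and suppose either m₁ ≥ 2 or m₂ ≥ 2, or m₁ = m₂ = 1 with p ≥ 5 and q ≥ 5. Then γ_R(Γ(ℤ_n)) = 4. -/
/-!
The vertices `n / p` and `n / q` are adjacent and, since every vertex is divisible by `p` or `q`,
they dominate the graph; labelling them `2` gives weight `4`. Conversely, it suffices that every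
vertex `v` has two non-neighbours besides itself: a Roman dominating function with a single `2`
must label them positively, and one without a `2` labels every vertex positively. The
non-neighbours of `v` are the vertices not divisible by the additive order `e` of `v`. If `p ∣ e`,
take multiples `k q ^ b` (or `k q` when `b ≥ 2`) with `p ∤ k`; when `p ^ a ∤ e`, `p` divides
`v`, so these multiples differ from `v`, and when `p ^ a ∣ e` any `k < p ^ a` will do.
-/

namespace SimpleGraph

variable {V : Type*} (G : SimpleGraph V)

lemma romanDominationNumber_le_two_mul_card (D : Finset V)
    (hD : ∀ u ∉ D, ∃ v ∈ D, G.Adj u v) : romanDominationNumber G ≤ 2 * D.card := by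
  classical
  let f : V → Fin 3 := fun v => if v ∈ D then 2 else 0
  have hf : IsRomanDominating G f := by
    intro u hu
    have hu : u ∉ D := fun h => by simp [f, h] at hu
    obtain ⟨v, hv, huv⟩ := hD u hu
    exact ⟨v, huv, if_pos hv⟩
  have hsupp : {v | f v ≠ 0} ⊆ D := fun v hv => by by_contra h; simp [f, h] at hv
  refine Nat.sInf_le ⟨f, hf, D.finite_toSet.subset hsupp, ?_⟩
  rw [finsum_eq_sum_of_support_subset _ (s := D) (fun v hv => hsupp (by simpa using hv)),
    Finset.sum_congr rfl (fun v hv => show (f v : ℕ) = 2 by simp [f, hv]), Finset.sum_const,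
    smul_eq_mul, mul_comm]

lemma le_romanDominationNumber [Finite V] {k : ℕ}
    (h : ∀ f, IsRomanDominating G f → k ≤ ∑ᶠ v, (f v : ℕ)) :
    k ≤ romanDominationNumber G := by
  have hconst : IsRomanDominating G (fun _ => 2) := fun _ h => by simp at h
  refine le_csInf ⟨_, fun _ => 2, hconst, Set.toFinite _, rfl⟩ ?_
  rintro w ⟨f, hf, -, rfl⟩
  exact h f hf

lemma degree_add_three_le_card [Fintype V] [DecidableRel G.Adj] {v x y z : V}
    (hxy : x ≠ y) (hxz : x ≠ z) (hyz : y ≠ z)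
    (hx : ¬ G.Adj v x) (hy : ¬ G.Adj v y) (hz : ¬ G.Adj v z) :
    G.degree v + 3 ≤ Fintype.card V := by
  classical
  have hxyz : ({x, y, z} : Finset V).card = 3 :=
    Finset.card_eq_three.2 ⟨x, y, z, hxy, hxz, hyz, rfl⟩
  have hsub : G.neighborFinset v ⊆ ({x, y, z} : Finset V)ᶜ := by
    intro w hw
    simp only [Finset.mem_compl, Finset.mem_insert, Finset.mem_singleton,
      mem_neighborFinset] at hw ⊢
    rintro (rfl | rfl | rfl) <;> contradiction
  have := Finset.card_le_card hsub
  rw [card_neighborFinset_eq_degree, Finset.card_compl, hxyz] at this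
  have := hxyz ▸ Finset.card_le_univ ({x, y, z} : Finset V)
  omega

lemma four_le_sum_of_isRomanDominating [Fintype V] [DecidableRel G.Adj] {a b : V}
    (hab : G.Adj a b) (hdeg : ∀ v, G.degree v + 3 ≤ Fintype.card V)
    {f : V → Fin 3} (hf : IsRomanDominating G f) : 4 ≤ ∑ v, (f v : ℕ) := by
  classical
  by_cases htwo : ∃ u, f u = 2
  · obtain ⟨u, hu⟩ := htwo
    by_cases htwo' : ∃ w, w ≠ u ∧ f w = 2
    · obtain ⟨w, hwu, hw⟩ := htwo'
      calc 4 = (f u : ℕ) + f w := by rw [hu, hw]; rfl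
        _ ≤ ∑ v, (f v : ℕ) := Finset.add_le_sum (f := fun v => (f v : ℕ))
          (fun _ _ => Nat.zero_le _) (Finset.mem_univ u) (Finset.mem_univ w) hwu.symm
    -- a vertex labelled 0 must be adjacent to `u`, the only vertex labelled 2
    have hS : ∀ w ∈ (G.neighborFinset u)ᶜ.erase u, 1 ≤ (f w : ℕ) := by
      intro w hw
      simp only [Finset.mem_erase, Finset.mem_compl, mem_neighborFinset] at hw
      rw [Nat.one_le_iff_ne_zero, Fin.val_ne_zero_iff]
      intro h0
      obtain ⟨z, hwz, hz⟩ := hf w h0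
      obtain rfl : z = u := by_contra fun hzu => htwo' ⟨z, hzu, hz⟩
      exact hw.2 hwz.symm
    have hu_mem : u ∈ (G.neighborFinset u)ᶜ := by simp
    have hcard := Finset.card_erase_of_mem hu_mem
    rw [Finset.card_compl, card_neighborFinset_eq_degree] at hcard
    calc 4 ≤ 2 + ((G.neighborFinset u)ᶜ.erase u).card := by have := hdeg u; omega
      _ ≤ (f u : ℕ) + ∑ w ∈ (G.neighborFinset u)ᶜ.erase u, (f w : ℕ) := by
          rw [hu]; simpa using Finset.card_nsmul_le_sum _ _ 1 hS
      _ = ∑ w ∈ insert u ((G.neighborFinset u)ᶜ.erase u), (f w : ℕ) :=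
          (Finset.sum_insert (f := fun w => (f w : ℕ)) (Finset.notMem_erase u _)).symm
      _ ≤ ∑ v, (f v : ℕ) := Finset.sum_le_sum_of_subset (Finset.subset_univ _)
  · have hpos : ∀ v ∈ Finset.univ, 1 ≤ (f v : ℕ) := fun v _ => by
      rw [Nat.one_le_iff_ne_zero, Fin.val_ne_zero_iff]
      intro h0
      obtain ⟨z, -, hz⟩ := hf v h0
      exact htwo ⟨z, hz⟩
    have hdeg_a : 1 ≤ G.degree a := Finset.card_pos.2 ⟨b, by simpa using hab⟩
    calc 4 ≤ Fintype.card V := by have := hdeg a; omega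
      _ ≤ ∑ v, (f v : ℕ) := by simpa using Finset.card_nsmul_le_sum _ _ 1 hpos

lemma four_le_romanDominationNumber [Fintype V] [DecidableRel G.Adj] {a b : V}
    (hab : G.Adj a b) (hdeg : ∀ v, G.degree v + 3 ≤ Fintype.card V) :
    4 ≤ romanDominationNumber G :=
  G.le_romanDominationNumber fun f hf => by
    rw [finsum_eq_sum_of_fintype]
    exact G.four_le_sum_of_isRomanDominating hab hdeg hf

end SimpleGraph

lemma Nat.dvd_or_dvd_of_not_coprime_mul_pow {p q a b m : ℕ} (hp : p.Prime) (hq : q.Prime)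
    (h : ¬ m.Coprime (p ^ a * q ^ b)) : p ∣ m ∨ q ∣ m := by
  by_contra! hpq
  refine h (Nat.Coprime.mul_right ?_ ?_) <;> refine Nat.Coprime.pow_right _ (Nat.coprime_comm.1 ?_)
  exacts [(hp.coprime_iff_not_dvd).2 hpq.1, (hq.coprime_iff_not_dvd).2 hpq.2]

lemma zeroDivisorGraph_not_adj_of_mul_ne_zero {R : Type*} [CommRing R] {u w : zdvSet R}
    (h : (u : R) * w ≠ 0) : ¬ (zeroDivisorGraph R).Adj u w :=
  fun hadj => h hadj.2

namespace ZMod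

variable {n P Q p q a b : ℕ}

lemma natCast_mem_zdvSet {k t : ℕ} (hk : ¬ n ∣ k) (ht : ¬ n ∣ t) (hkt : n ∣ k * t) :
    (k : ZMod n) ∈ zdvSet (ZMod n) := by
  refine ⟨?_, t, ?_, ?_⟩ <;> simpa only [Ne, ← Nat.cast_mul, ZMod.natCast_eq_zero_iff]

lemma natCast_div_mem_zdvSet {r : ℕ} (hr : 1 < r) (hrn : r ∣ n) (hlt : r < n) :
    ((n / r : ℕ) : ZMod n) ∈ zdvSet (ZMod n) :=
  natCast_mem_zdvSet (t := r)
    (Nat.not_dvd_of_pos_of_lt (Nat.div_pos hlt.le (by omega)) (Nat.div_lt_self (by omega) hr))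
    (Nat.not_dvd_of_pos_of_lt (by omega) hlt) (dvd_of_eq (Nat.div_mul_cancel hrn).symm)

lemma natCast_mul_ne_natCast_mul (hn : n = P * Q) (hQ : 0 < Q) {k₁ k₂ : ℕ}
    (h₁₂ : k₁ < k₂) (h₂ : k₂ < P) : ((k₁ * Q : ℕ) : ZMod n) ≠ ((k₂ * Q : ℕ) : ZMod n) := by
  have hlt : ∀ k < P, k * Q < n := fun k hk => hn ▸ Nat.mul_lt_mul_of_pos_right hk hQ
  rw [Ne, ZMod.natCast_eq_natCast_iff', Nat.mod_eq_of_lt (hlt k₁ (h₁₂.trans h₂)),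
    Nat.mod_eq_of_lt (hlt k₂ h₂)]
  exact (Nat.mul_lt_mul_of_pos_right h₁₂ hQ).ne

lemma mul_natCast_eq_zero_iff (v : ZMod n) (k : ℕ) : v * k = 0 ↔ addOrderOf v ∣ k := by
  rw [addOrderOf_dvd_iff_nsmul_eq_zero, nsmul_eq_mul, mul_comm]

variable [NeZero n]

lemma mul_natCast_div_eq_zero {r : ℕ} (x : ZMod n) (hr : r ∣ x.val) (hrn : r ∣ n) :
    x * ((n / r : ℕ) : ZMod n) = 0 := by
  obtain ⟨j, hj⟩ := hr
  rw [← ZMod.natCast_zmod_val x, ← Nat.cast_mul, ZMod.natCast_eq_zero_iff, hj, mul_comm r,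
    mul_assoc, Nat.mul_div_cancel' hrn]
  exact dvd_mul_left n j

lemma not_coprime_val_of_mem_zdvSet {x : ZMod n} (hx : x ∈ zdvSet (ZMod n)) :
    ¬ x.val.Coprime n := by
  obtain ⟨-, y, hy, hxy⟩ := hx
  intro hcop
  have hunit : IsUnit x := by
    rw [← ZMod.natCast_zmod_val x]
    exact (ZMod.isUnit_iff_coprime _ _).2 hcop
  exact hy (hunit.mul_right_eq_zero.1 hxy)

lemma prime_dvd_val_of_not_pow_dvd_addOrderOf (hp : p.Prime) (v : ZMod n)
    (hn : p ^ a ∣ n) (hv : ¬ p ^ a ∣ addOrderOf v) : p ∣ v.val := by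
  have horder : addOrderOf v * n.gcd v.val = n := by
    rw [← ZMod.natCast_zmod_val v, ZMod.addOrderOf_coe _ (NeZero.ne n), ZMod.val_natCast,
      Nat.mod_eq_of_lt (ZMod.val_lt v)]
    exact Nat.div_mul_cancel (Nat.gcd_dvd_left _ _)
  by_contra hpv
  have hcop : (p ^ a).Coprime (n.gcd v.val) :=
    Nat.Coprime.pow_left a <|
      (hp.coprime_iff_not_dvd).2 fun h => hpv (h.trans (Nat.gcd_dvd_right _ _))
  exact hv (hcop.dvd_of_dvd_mul_right (hn.trans (dvd_of_eq horder.symm)))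

lemma natCast_mul_mem_zdvSet (hn : n = P * Q) (hQ : 1 < Q) {k : ℕ} (hk : 0 < k) (hkP : k < P) :
    ((k * Q : ℕ) : ZMod n) ∈ zdvSet (ZMod n) := by
  subst hn
  refine natCast_mem_zdvSet (t := P) (Nat.not_dvd_of_pos_of_lt (by positivity) ?_)
    (Nat.not_dvd_of_pos_of_lt (by omega) ?_) ⟨k, by ring⟩
  · exact Nat.mul_lt_mul_of_pos_right hkP (by omega)
  · exact lt_mul_of_one_lt_right (by omega) hQ

lemma zeroDivisorGraph_exists_adj_dominating_pair (hp : p.Prime) (hq : q.Prime) (hpq : p ≠ q)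
    (ha : 1 ≤ a) (hb : 1 ≤ b) (hn : n = p ^ a * q ^ b) :
    ∃ A B : zdvSet (ZMod n), (zeroDivisorGraph (ZMod n)).Adj A B ∧
      ∀ u ∉ ({A, B} : Finset (zdvSet (ZMod n))), ∃ w ∈ ({A, B} : Finset (zdvSet (ZMod n))),
        (zeroDivisorGraph (ZMod n)).Adj u w := by
  have hn0 : 0 < n := Nat.pos_of_ne_zero (NeZero.ne n)
  have hpn : p ∣ n := hn ▸ (dvd_pow_self p (by omega)).mul_right _
  have hqn : q ∣ n := hn ▸ (dvd_pow_self q (by omega)).mul_left _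
  have hpqn : p * q ∣ n :=
    hn ▸ mul_dvd_mul (dvd_pow_self p (by omega)) (dvd_pow_self q (by omega))
  have hplt : p < n :=
    (Nat.le_of_dvd hn0 hpqn).trans_lt' (lt_mul_of_one_lt_right hp.pos hq.one_lt)
  have hqlt : q < n :=
    (Nat.le_of_dvd hn0 hpqn).trans_lt' (lt_mul_of_one_lt_left hq.pos hp.one_lt)
  have hval : ∀ {r}, 1 < r → ((n / r : ℕ) : ZMod n).val = n / r := fun hr =>
    ZMod.val_cast_of_lt (Nat.div_lt_self hn0 hr)
  let A : zdvSet (ZMod n) := ⟨_, natCast_div_mem_zdvSet hp.one_lt hpn hplt⟩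
  let B : zdvSet (ZMod n) := ⟨_, natCast_div_mem_zdvSet hq.one_lt hqn hqlt⟩
  have hAB : A ≠ B := fun h => hpq <| by
    have hdiv : n / p = n / q := by
      simpa only [A, B, hval hp.one_lt, hval hq.one_lt] using
        congrArg (fun x : zdvSet (ZMod n) => (x : ZMod n).val) h
    refine Nat.eq_of_mul_eq_mul_left (Nat.div_pos hplt.le hp.pos) ?_
    rw [Nat.div_mul_cancel hpn, hdiv, Nat.div_mul_cancel hqn]
  refine ⟨A, B, ⟨hAB, mul_natCast_div_eq_zero _ ?_ hqn⟩, fun u hu => ?_⟩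
  · rw [hval hp.one_lt]
    exact Nat.dvd_div_of_mul_dvd hpqn
  simp only [Finset.mem_insert, Finset.mem_singleton, not_or] at hu
  have hu_val : ¬ (u : ZMod n).val.Coprime (p ^ a * q ^ b) := hn ▸ not_coprime_val_of_mem_zdvSet u.2
  rcases Nat.dvd_or_dvd_of_not_coprime_mul_pow hp hq hu_val with hpu | hqu
  · exact ⟨A, by simp, hu.1, mul_natCast_div_eq_zero _ hpu hpn⟩
  · exact ⟨B, by simp, hu.2, mul_natCast_div_eq_zero _ hqu hqn⟩

variable [Fintype (zdvSet (ZMod n))] [DecidableRel (zeroDivisorGraph (ZMod n)).Adj]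

lemma degree_add_three_le_of_two_multiples (hn : n = P * Q) (hQ : 1 < Q) (v : zdvSet (ZMod n))
    {d k₁ k₂ : ℕ} (hd : d ∣ addOrderOf (v : ZMod n)) (h₁ : 0 < k₁) (h₁₂ : k₁ < k₂)
    (h₂ : k₂ < P) (hd₁ : ¬ d ∣ k₁ * Q) (hd₂ : ¬ d ∣ k₂ * Q)
    (hv₁ : (v : ZMod n) ≠ (k₁ * Q : ℕ)) (hv₂ : (v : ZMod n) ≠ (k₂ * Q : ℕ)) :
    (zeroDivisorGraph (ZMod n)).degree v + 3 ≤ Fintype.card (zdvSet (ZMod n)) := by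
  have hnadj : ∀ {k} (hk : 0 < k) (hkP : k < P), ¬ d ∣ k * Q →
      ¬ (zeroDivisorGraph (ZMod n)).Adj v ⟨_, natCast_mul_mem_zdvSet hn hQ hk hkP⟩ :=
    fun _ _ hdk => zeroDivisorGraph_not_adj_of_mul_ne_zero fun h =>
      hdk (hd.trans ((mul_natCast_eq_zero_iff _ _).1 h))
  refine SimpleGraph.degree_add_three_le_card _ (x := v) (fun h => hv₁ (congrArg Subtype.val h))
    (fun h => hv₂ (congrArg Subtype.val h))
    (fun h => natCast_mul_ne_natCast_mul hn (by omega) h₁₂ h₂ (congrArg Subtype.val h))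
    ((zeroDivisorGraph _).irrefl) (hnadj h₁ (h₁₂.trans h₂) hd₁)
    (hnadj (h₁.trans h₁₂) h₂ hd₂)

lemma degree_add_three_le_of_three_multiples (hn : n = P * Q) (hQ : 1 < Q) (v : zdvSet (ZMod n))
    {d k₁ k₂ k₃ : ℕ} (hd : d ∣ addOrderOf (v : ZMod n)) (h₁ : 0 < k₁) (h₁₂ : k₁ < k₂)
    (h₂₃ : k₂ < k₃) (h₃ : k₃ < P) (hd₁ : ¬ d ∣ k₁ * Q) (hd₂ : ¬ d ∣ k₂ * Q)
    (hd₃ : ¬ d ∣ k₃ * Q) :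
    (zeroDivisorGraph (ZMod n)).degree v + 3 ≤ Fintype.card (zdvSet (ZMod n)) := by
  by_cases hv₁ : (v : ZMod n) = (k₁ * Q : ℕ)
  · refine degree_add_three_le_of_two_multiples hn hQ v hd (h₁.trans h₁₂) h₂₃ h₃ hd₂ hd₃
      ?_ ?_
    all_goals rw [hv₁]; refine natCast_mul_ne_natCast_mul hn (by omega) ?_ ?_ <;> omega
  by_cases hv₂ : (v : ZMod n) = (k₂ * Q : ℕ)
  · refine degree_add_three_le_of_two_multiples hn hQ v hd h₁ (h₁₂.trans h₂₃) h₃ hd₁ hd₃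
      hv₁ ?_
    rw [hv₂]; exact natCast_mul_ne_natCast_mul hn (by omega) h₂₃ h₃
  exact degree_add_three_le_of_two_multiples hn hQ v hd h₁ h₁₂ (h₂₃.trans h₃) hd₁ hd₂
    hv₁ hv₂

lemma degree_add_three_le_of_prime_dvd_addOrderOf (hp : p.Prime) (hq : q.Prime) (hpq : p ≠ q)
    (ha : 1 ≤ a) (hb : 1 ≤ b) (hn : n = p ^ a * q ^ b) (hsize : 4 ≤ p ^ a ∨ 2 ≤ b)
    (v : zdvSet (ZMod n)) (hpe : p ∣ addOrderOf (v : ZMod n)) :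
    (zeroDivisorGraph (ZMod n)).degree v + 3 ≤ Fintype.card (zdvSet (ZMod n)) := by
  have hpq' : p.Coprime q := (Nat.coprime_primes hp hq).2 hpq
  have hp_not_dvd : ∀ {k m : ℕ}, p.Coprime k → p.Coprime m → ¬ p ∣ k * m := fun hk hm =>
    (hp.coprime_iff_not_dvd).1 (hk.mul_right hm)
  have hp_sub_one : ∀ {m : ℕ}, p ∣ m → 0 < m → p.Coprime (m - 1) := fun hm hm0 =>
    Nat.Coprime.coprime_dvd_left hm ((Nat.coprime_self_sub_right hm0).2 (Nat.coprime_one_right _))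
  have hpa : p ≤ p ^ a := Nat.le_self_pow (by omega) p
  by_cases hb2 : 2 ≤ b
  · have hqb : 2 ≤ q ^ (b - 1) := (Nat.le_self_pow (by omega) q).trans' hq.two_le
    have hn' : n = p ^ a * q ^ (b - 1) * q := by
      rw [hn, mul_assoc, ← pow_succ, Nat.sub_add_cancel hb]
    have hP : 2 * q ^ (b - 1) ≤ p ^ a * q ^ (b - 1) :=
      Nat.mul_le_mul_right _ (hp.two_le.trans hpa)
    refine degree_add_three_le_of_three_multiples hn' hq.one_lt v hpe one_pos
      (k₂ := q ^ (b - 1)) (k₃ := p ^ a * q ^ (b - 1) - 1) (by omega) (by omega) (by omega)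
      (hp_not_dvd (Nat.coprime_one_right p) hpq') (hp_not_dvd (hpq'.pow_right _) hpq')
      (hp_not_dvd (hp_sub_one ((dvd_pow_self p (by omega)).mul_right _) (by omega)) hpq')
  replace hsize : 4 ≤ p ^ a := by omega
  have hqb : 1 < q ^ b := Nat.one_lt_pow (by omega) hq.one_lt
  by_cases hfull : p ^ a ∣ addOrderOf (v : ZMod n)
  · have hpaqb : ∀ {k}, 0 < k → k < p ^ a → ¬ p ^ a ∣ k * q ^ b := fun hk hkP h =>
      Nat.not_dvd_of_pos_of_lt hk hkP (((hpq'.pow a b).dvd_of_dvd_mul_right h))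
    exact degree_add_three_le_of_three_multiples hn (by omega) v hfull one_pos one_lt_two
      (by omega : 2 < 3) (by omega) (hpaqb one_pos (by omega)) (hpaqb two_pos (by omega))
      (hpaqb three_pos (by omega))
  · have hpv := prime_dvd_val_of_not_pow_dvd_addOrderOf hp _ (hn ▸ dvd_mul_right _ _) hfull
    have hne : ∀ {k}, p.Coprime k → k * q ^ b < n → (v : ZMod n) ≠ (k * q ^ b : ℕ) :=
      fun hk hlt h => hp_not_dvd hk (hpq'.pow_right b) (by rwa [h, ZMod.val_cast_of_lt hlt] at hpv)
    have hlt : ∀ {k}, k < p ^ a → k * q ^ b < n := fun hk =>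
      hn ▸ Nat.mul_lt_mul_of_pos_right hk (by omega)
    have hsub := hp_sub_one (dvd_pow_self p (by omega : a ≠ 0)) (by omega)
    exact degree_add_three_le_of_two_multiples hn hqb v hpe one_pos (by omega : 1 < p ^ a - 1)
      (by omega) (hp_not_dvd (Nat.coprime_one_right p) (hpq'.pow_right b))
      (hp_not_dvd hsub (hpq'.pow_right b)) (hne (Nat.coprime_one_right p) (hlt (by omega)))
      (hne hsub (hlt (by omega)))

lemma zeroDivisorGraph_degree_add_three_le (hp : p.Prime) (hq : q.Prime) (hpq : p ≠ q) (ha : 1 ≤ a)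
    (hb : 1 ≤ b) (hn : n = p ^ a * q ^ b) (hsize_p : 4 ≤ p ^ a ∨ 2 ≤ b)
    (hsize_q : 4 ≤ q ^ b ∨ 2 ≤ a)
    (v : zdvSet (ZMod n)) :
    (zeroDivisorGraph (ZMod n)).degree v + 3 ≤ Fintype.card (zdvSet (ZMod n)) := by
  have hdvd : addOrderOf (v : ZMod n) ∣ n := by
    simpa using addOrderOf_dvd_card (x := (v : ZMod n))
  have horder : ¬ (addOrderOf (v : ZMod n)).Coprime (p ^ a * q ^ b) := fun h =>
    v.2.1 <| AddMonoid.addOrderOf_eq_one_iff.1 <| h.eq_one_of_dvd (hdvd.trans (dvd_of_eq hn))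
  rcases Nat.dvd_or_dvd_of_not_coprime_mul_pow hp hq horder with hpv | hqv
  · exact degree_add_three_le_of_prime_dvd_addOrderOf hp hq hpq ha hb hn hsize_p v hpv
  · exact degree_add_three_le_of_prime_dvd_addOrderOf hq hp hpq.symm hb ha
      (hn.trans (mul_comm _ _)) hsize_q v hqv

end ZMod

theorem stmt_12 (p q m₁ m₂ : ℕ) (hp : p.Prime) (hq : q.Prime) (hpq : p ≠ q)
    (hm₁ : 1 ≤ m₁) (hm₂ : 1 ≤ m₂)
    (hcase : 2 ≤ m₁ ∨ 2 ≤ m₂ ∨ (m₁ = 1 ∧ m₂ = 1 ∧ 5 ≤ p ∧ 5 ≤ q))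
    (n : ℕ) (hn : n = p ^ m₁ * q ^ m₂) :
    romanDominationNumber (zeroDivisorGraph (ZMod n)) = 4 := by
  have : NeZero n := ⟨by subst hn; have := hp.pos; have := hq.pos; positivity⟩
  classical
  let : Fintype (zdvSet (ZMod n)) := Fintype.ofFinite _
  have four_le_pow : ∀ {r c : ℕ}, r.Prime → 2 ≤ c → 4 ≤ r ^ c := fun hr hc =>
    (Nat.pow_le_pow_right hr.pos hc).trans' (by nlinarith [hr.two_le])
  have hsize_p : 4 ≤ p ^ m₁ ∨ 2 ≤ m₂ := by
    rcases hcase with h | h | ⟨rfl, -, h5, -⟩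
    exacts [Or.inl (four_le_pow hp h), Or.inr h, Or.inl (by simpa using h5.trans' (by norm_num))]
  have hsize_q : 4 ≤ q ^ m₂ ∨ 2 ≤ m₁ := by
    rcases hcase with h | h | ⟨-, rfl, -, h5⟩
    exacts [Or.inr h, Or.inl (four_le_pow hq h), Or.inl (by simpa using h5.trans' (by norm_num))]
  obtain ⟨A, B, hAB, hdom⟩ := ZMod.zeroDivisorGraph_exists_adj_dominating_pair hp hq hpq hm₁ hm₂ hn
  refine le_antisymm ?_ <| SimpleGraph.four_le_romanDominationNumber _ hAB
    (ZMod.zeroDivisorGraph_degree_add_three_le hp hq hpq hm₁ hm₂ hn hsize_p hsize_q)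
  calc _ ≤ 2 * ({A, B} : Finset _).card :=
        SimpleGraph.romanDominationNumber_le_two_mul_card _ _ hdom
    _ = 4 := by rw [Finset.card_pair hAB.ne]
end

section
/- Let R be a commutative ring with identity and let P be a prime ideal of R that is finite as a set. Then γ_R(Γ(R)) ≤ 2(|P| − 1). -/
/-!
The function with value `2` on the nonzero zero-divisors lying in `P` and `0` elsewhere is Roman
dominating: if `u ∉ P` is a zero-divisor with `u * y = 0`, `y ≠ 0`, then `y ∈ P` by primality.
Its weight is twice the number of such vertices, which is at most `|P| - 1` since `0 ∈ P`.
-/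

open Classical in
theorem romanDominationNumber_le_two_mul_ncard {V : Type*} (G : SimpleGraph V) {S : Set V}
    (hS : S.Finite) (hdom : ∀ u ∉ S, ∃ v ∈ S, G.Adj u v) :
    romanDominationNumber G ≤ 2 * S.ncard := by
  let f : V → Fin 3 := fun v => if v ∈ S then 2 else 0
  have hf : IsRomanDominating G f := fun u hu => by
    obtain ⟨v, hvS, huv⟩ := hdom u fun huS => by simp [f, huS] at hu
    exact ⟨v, huv, if_pos hvS⟩
  have hsupp : {v | f v ≠ 0} = S := by
    ext v; by_cases hv : v ∈ S <;> simp [f, hv]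
  have hweight : ∑ᶠ v, (f v : ℕ) = 2 * S.ncard := by
    have hind : (fun v => (f v : ℕ)) = S.indicator fun _ => 2 := by
      ext v; by_cases hv : v ∈ S <;> simp [f, hv]
    rw [hind, ← finsum_mem_def, finsum_mem_eq_finite_toFinset_sum _ hS, Finset.sum_const,
      smul_eq_mul, Set.ncard_eq_toFinset_card S hS, mul_comm]
  exact Nat.sInf_le ⟨f, hf, hsupp ▸ hS, hweight.symm⟩

theorem zeroDivisorGraph_exists_adj_mem_of_notMem {R : Type*} [CommRing R] {P : Ideal R}
    (hP : P.IsPrime) (u : zdvSet R) (huP : (u : R) ∉ P) :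
    ∃ v ∈ Subtype.val ⁻¹' (P : Set R), (zeroDivisorGraph R).Adj u v := by
  obtain ⟨hu0, y, hy0, huy⟩ := u.2
  have hyP : y ∈ P := (hP.mem_or_mem (huy ▸ P.zero_mem)).resolve_left huP
  exact ⟨⟨y, hy0, u, hu0, by rw [mul_comm, huy]⟩, hyP,
    fun h => huP (congrArg Subtype.val h ▸ hyP), huy⟩

theorem ncard_preimage_val_zdvSet_le {R : Type*} [CommRing R] {s : Set R} (hs : s.Finite)
    (h0 : (0 : R) ∈ s) :
    (Subtype.val ⁻¹' s : Set (zdvSet R)).ncard ≤ s.ncard - 1 := by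
  rw [← Set.ncard_sdiff_singleton_of_mem h0]
  exact Set.ncard_le_ncard_of_injOn Subtype.val (fun v hv => ⟨hv, v.2.1⟩)
    Subtype.val_injective.injOn hs.sdiff

theorem stmt_14 (R : Type*) [CommRing R] (P : Ideal R) (hP : P.IsPrime)
    (hfin : (P : Set R).Finite) :
    romanDominationNumber (zeroDivisorGraph R) ≤ 2 * ((P : Set R).ncard - 1) :=
  calc romanDominationNumber (zeroDivisorGraph R)
      ≤ 2 * (Subtype.val ⁻¹' (P : Set R) : Set (zdvSet R)).ncard :=
        romanDominationNumber_le_two_mul_ncard _ (hfin.preimage Subtype.val_injective.injOn)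
          (zeroDivisorGraph_exists_adj_mem_of_notMem hP)
    _ ≤ 2 * ((P : Set R).ncard - 1) :=
        Nat.mul_le_mul_left 2 (ncard_preimage_val_zdvSet_le hfin P.zero_mem)
end

section
/- For any finite simple graph G, the domination number and Roman domination number satisfy γ(G) ≤ γ_R(G) ≤ 2γ(G). -/
/-- The domination number of a graph: the minimum size of a dominating set. -/
noncomputable def dominationNumber {V : Type*} (G : SimpleGraph V) : ℕ :=
  sInf {n | ∃ S : Finset V, (∀ v, v ∉ S → ∃ u ∈ S, G.Adj v u) ∧ n = S.card}

/-! The vertices where a Roman dominating function is nonzero form a dominating set of size at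
most its weight; conversely, the value `2` on a dominating set and `0` elsewhere is a Roman
dominating function of twice its size. No finiteness of the graph is needed: the two
constructions also show that a finite dominating set exists iff a finitely supported Roman
dominating function does, and when neither exists both numbers are `sInf ∅ = 0`. -/

theorem Nat.sInf_le_of_forall_exists_le {s t : Set ℕ} {g : ℕ → ℕ}
    (hst : ∀ a ∈ s, ∃ b ∈ t, b ≤ g a) (hts : t.Nonempty → s.Nonempty) :
    sInf t ≤ g (sInf s) := by
  rcases s.eq_empty_or_nonempty with rfl | hs
  · have ht : t = ∅ := Set.not_nonempty_iff_eq_empty.mp fun h => (hts h).ne_empty rfl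
    simp [ht]
  · obtain ⟨b, hb, hle⟩ := hst _ (Nat.sInf_mem hs)
    exact (Nat.sInf_le hb).trans hle

namespace IsRomanDominating

variable {V : Type*} {G : SimpleGraph V} {f : V → Fin 3}

theorem exists_dominating_card_le (hf : IsRomanDominating G f)
    (hfin : {v | f v ≠ 0}.Finite) :
    ∃ S : Finset V, (∀ v, v ∉ S → ∃ u ∈ S, G.Adj v u) ∧ S.card ≤ ∑ᶠ v, (f v : ℕ) := by
  refine ⟨hfin.toFinset, fun v hv => ?_, ?_⟩
  · obtain ⟨u, hadj, hu⟩ := hf v (by simpa using hv)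
    exact ⟨u, by simp [hu], hadj⟩
  · rw [finsum_eq_sum_of_support_subset _ (s := hfin.toFinset) fun v hv => by
      simpa [Fin.val_ne_zero_iff] using hv]
    simpa using Finset.card_nsmul_le_sum hfin.toFinset (fun v => (f v : ℕ)) 1 fun v hv => by
      simpa [Nat.one_le_iff_ne_zero, Fin.val_ne_zero_iff] using hv

end IsRomanDominating

theorem isRomanDominating_ite_mem {V : Type*} [DecidableEq V] {G : SimpleGraph V} {S : Finset V}
    (hS : ∀ v, v ∉ S → ∃ u ∈ S, G.Adj v u) :
    IsRomanDominating G (fun v => if v ∈ S then 2 else 0) := by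
  intro v hv
  obtain ⟨u, hu, hadj⟩ := hS v (by simpa using hv)
  exact ⟨u, hadj, by simp [hu]⟩

theorem finsum_ite_mem_two {V : Type*} [DecidableEq V] (S : Finset V) :
    ∑ᶠ v, (((if v ∈ S then 2 else 0 : Fin 3)) : ℕ) = 2 * S.card := by
  rw [finsum_eq_sum_of_support_subset (s := S) _
    (Function.support_subset_iff'.mpr fun v hv => by simp [Finset.mem_coe.not.mp hv])]
  simp [apply_ite, Finset.sum_ite_mem, mul_comm]

theorem stmt_17_general (V : Type*) (G : SimpleGraph V) :
    dominationNumber G ≤ romanDominationNumber G ∧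
      romanDominationNumber G ≤ 2 * dominationNumber G := by
  classical
  have roman_of_dominating : ∀ S : Finset V, (∀ v, v ∉ S → ∃ u ∈ S, G.Adj v u) →
      2 * S.card ∈ {w | ∃ f : V → Fin 3, IsRomanDominating G f ∧
        {v | f v ≠ 0}.Finite ∧ w = ∑ᶠ v, (f v : ℕ)} := fun S hS =>
    ⟨_, isRomanDominating_ite_mem hS, S.finite_toSet.subset (by simp),
      (finsum_ite_mem_two S).symm⟩
  constructor
  · refine Nat.sInf_le_of_forall_exists_le (g := id) ?_ ?_
    · rintro _ ⟨f, hf, hfin, rfl⟩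
      obtain ⟨S, hS, hcard⟩ := hf.exists_dominating_card_le hfin
      exact ⟨S.card, ⟨S, hS, rfl⟩, hcard⟩
    · rintro ⟨_, S, hS, -⟩
      exact ⟨_, roman_of_dominating S hS⟩
  · refine Nat.sInf_le_of_forall_exists_le ?_ ?_
    · rintro _ ⟨S, hS, rfl⟩
      exact ⟨_, roman_of_dominating S hS, le_rfl⟩
    · rintro ⟨_, f, hf, hfin, -⟩
      obtain ⟨S, hS, -⟩ := hf.exists_dominating_card_le hfin
      exact ⟨_, S, hS, rfl⟩

theorem stmt_17 (V : Type*) [Fintype V] (G : SimpleGraph V) :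
    dominationNumber G ≤ romanDominationNumber G ∧
      romanDominationNumber G ≤ 2 * dominationNumber G :=
  stmt_17_general V G
end

section
/- For any finite simple graph G, the domination number equals the Roman domination number, γ(G) = γ_R(G), if and only if G has no edges (i.e., G is the complement of a complete graph on its vertex set). -/
/-!
Let `f` be a Roman dominating function of minimum weight on a graph with an edge `uv`.
Its support `{f ≠ 0}` is a dominating set. If `f` takes the value `2` somewhere, the
support is strictly smaller than the weight of `f`. Otherwise no vertex can have value `0`,
so the weight is `|V|`, while `V \ {u}` is already dominating. Either way `γ < γ_R`.
On the edgeless graph the only dominating set is `V` and every Roman dominating function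
is nowhere zero, so `γ = γ_R = |V|`.
-/

namespace SimpleGraph

variable {V : Type*} {G : SimpleGraph V}

def IsDominatingSet (G : SimpleGraph V) (S : Finset V) : Prop :=
  ∀ v, v ∉ S → ∃ u ∈ S, G.Adj v u

lemma isDominatingSet_univ [Fintype V] : G.IsDominatingSet Finset.univ :=
  fun v hv => absurd (Finset.mem_univ v) hv

lemma IsDominatingSet.eq_univ_of_bot [Fintype V] {S : Finset V}
    (hS : (⊥ : SimpleGraph V).IsDominatingSet S) : S = Finset.univ :=
  Finset.eq_univ_iff_forall.mpr fun v => by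
    by_contra hv
    obtain ⟨_, _, hadj⟩ := hS v hv
    exact hadj

lemma isDominatingSet_erase_of_adj [Fintype V] [DecidableEq V] {u v : V} (huv : G.Adj u v) :
    G.IsDominatingSet (Finset.univ.erase u) := by
  intro x hx
  obtain rfl : x = u := by simpa using hx
  exact ⟨v, by simpa using huv.ne.symm, huv⟩

lemma dominationNumber_le {S : Finset V} (hS : G.IsDominatingSet S) :
    dominationNumber G ≤ S.card :=
  Nat.sInf_le ⟨S, hS, rfl⟩

lemma exists_isDominatingSet_card_eq [Fintype V] :
    ∃ S, G.IsDominatingSet S ∧ S.card = dominationNumber G := by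
  obtain ⟨S, hS, hcard⟩ := Nat.sInf_mem
    (show {n | ∃ S, G.IsDominatingSet S ∧ n = S.card}.Nonempty from
      ⟨_, Finset.univ, isDominatingSet_univ, rfl⟩)
  exact ⟨S, hS, hcard.symm⟩

lemma dominationNumber_lt_card_of_adj [Fintype V] {u v : V} (huv : G.Adj u v) :
    dominationNumber G < Fintype.card V := by
  classical
  calc dominationNumber G ≤ (Finset.univ.erase u).card :=
        dominationNumber_le (isDominatingSet_erase_of_adj huv)
    _ < Fintype.card V := Finset.card_erase_lt_of_mem (Finset.mem_univ u)

lemma dominationNumber_bot [Fintype V] :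
    dominationNumber (⊥ : SimpleGraph V) = Fintype.card V := by
  obtain ⟨S, hS, hcard⟩ := (⊥ : SimpleGraph V).exists_isDominatingSet_card_eq
  rw [← hcard, hS.eq_univ_of_bot, Finset.card_univ]

end SimpleGraph

open SimpleGraph

namespace IsRomanDominating

variable {V : Type*} {G : SimpleGraph V} {f : V → Fin 3}

lemma isDominatingSet_support [Fintype V] (hf : IsRomanDominating G f) :
    G.IsDominatingSet (Finset.univ.filter fun v => f v ≠ 0) := by
  intro x hx
  obtain ⟨y, hxy, hy⟩ := hf x (by simpa using hx)
  exact ⟨y, by simp [hy], hxy⟩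

lemma ne_zero_of_forall_ne_two (hf : IsRomanDominating G f) (h2 : ∀ v, f v ≠ 2) (v : V) :
    f v ≠ 0 := fun h0 =>
  let ⟨w, _, hw⟩ := hf v h0
  h2 w hw

lemma ne_zero_of_bot (hf : IsRomanDominating ⊥ f) (v : V) : f v ≠ 0 := fun h0 =>
  let ⟨_, hadj, _⟩ := hf v h0
  hadj

end IsRomanDominating

section RomanDomination

variable {V : Type*} {G : SimpleGraph V}

lemma isRomanDominating_one : IsRomanDominating G 1 :=
  fun _ h => (one_ne_zero h).elim

lemma card_le_sum_of_forall_ne_zero [Fintype V] {f : V → Fin 3} (hf : ∀ v, f v ≠ 0) :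
    Fintype.card V ≤ ∑ v, (f v : ℕ) := by
  rw [Fintype.card_eq_sum_ones]
  exact Finset.sum_le_sum fun v _ => Nat.pos_of_ne_zero (Fin.val_ne_zero_iff.mpr (hf v))

lemma card_support_lt_sum_of_eq_two [Fintype V] {f : V → Fin 3} {x : V} (hx : f x = 2) :
    (Finset.univ.filter fun v => f v ≠ 0).card < ∑ v, (f v : ℕ) := by
  rw [Finset.card_filter]
  refine Finset.sum_lt_sum (fun v _ => ?_) ⟨x, Finset.mem_univ x, by simp [hx]⟩
  split_ifs with hv
  · exact Nat.pos_of_ne_zero (Fin.val_ne_zero_iff.mpr hv)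
  · exact Nat.zero_le _

lemma romanDominationNumber_le [Fintype V] {f : V → Fin 3} (hf : IsRomanDominating G f) :
    romanDominationNumber G ≤ ∑ v, (f v : ℕ) :=
  Nat.sInf_le ⟨f, hf, Set.toFinite _, (finsum_eq_sum_of_fintype _).symm⟩

lemma exists_isRomanDominating_sum_eq [Fintype V] :
    ∃ f, IsRomanDominating G f ∧ ∑ v, (f v : ℕ) = romanDominationNumber G := by
  obtain ⟨f, hf, -, hw⟩ := Nat.sInf_mem
    (show {w | ∃ f : V → Fin 3, IsRomanDominating G f ∧
        {v | f v ≠ 0}.Finite ∧ w = ∑ᶠ v, (f v : ℕ)}.Nonempty from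
      ⟨_, 1, isRomanDominating_one, Set.toFinite _, rfl⟩)
  exact ⟨f, hf, by rw [← finsum_eq_sum_of_fintype]; exact hw.symm⟩

lemma dominationNumber_lt_sum_of_adj [Fintype V] {f : V → Fin 3} (hf : IsRomanDominating G f)
    {u w : V} (huw : G.Adj u w) : dominationNumber G < ∑ v, (f v : ℕ) := by
  by_cases h2 : ∃ x, f x = 2
  · obtain ⟨x, hx⟩ := h2
    exact (dominationNumber_le hf.isDominatingSet_support).trans_lt
      (card_support_lt_sum_of_eq_two hx)
  · simp only [not_exists] at h2
    exact (dominationNumber_lt_card_of_adj huw).trans_le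
      (card_le_sum_of_forall_ne_zero (hf.ne_zero_of_forall_ne_two h2))

lemma romanDominationNumber_bot [Fintype V] :
    romanDominationNumber (⊥ : SimpleGraph V) = Fintype.card V := by
  obtain ⟨f, hf, hw⟩ := exists_isRomanDominating_sum_eq (G := (⊥ : SimpleGraph V))
  refine le_antisymm ?_ ?_
  · simpa using romanDominationNumber_le (G := ⊥) (isRomanDominating_one (V := V))
  · exact hw ▸ card_le_sum_of_forall_ne_zero hf.ne_zero_of_bot

end RomanDomination

theorem stmt_18 (V : Type*) [Fintype V] (G : SimpleGraph V) :
    dominationNumber G = romanDominationNumber G ↔ G = ⊥ := by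
  constructor
  · intro h
    by_contra hG
    obtain ⟨u, v, huv⟩ := ne_bot_iff_exists_adj.mp hG
    obtain ⟨f, hf, hw⟩ := exists_isRomanDominating_sum_eq (G := G)
    exact (dominationNumber_lt_sum_of_adj hf huv).ne (h.trans hw.symm)
  · rintro rfl
    rw [dominationNumber_bot, romanDominationNumber_bot]
end
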